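/- arXiv:0902.4732 — 12 statements merged into one kernel-verified Lean document; each statement's English description precedes it below -/
import Mathlib

section
/- For every integer k ≥ 2, the matrix product B^∧_k := A^∧_{4k−3} · A^∧_{4k−4} · A^∧_{4k−5} · A^∧_{4k−6} equals the 2×2 matrix with rows (5k(k−1)³, k(12k²−15k+5)) and (12k(k+1)(k−1)³, k(k+1)(29k²−36k+12)). -/
theorem Matrix.companion_mul {R : Type*} [CommRing R] (a b c d : R) :
    !![0, 1; a, b] * !![0, 1; c, d] = !![c, d; b * c, a + b * d] := by
  rw [Matrix.mul_fin_two]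
  congr <;> ring

theorem stmt_3_general (a b : ℕ → ℚ) (A : ℕ → Matrix (Fin 2) (Fin 2) ℚ)
    (h1 : ∀ k : ℕ, 1 ≤ k →
      b (4 * k + 1) = 2 * (k : ℚ) + 2 ∧ a (4 * k + 1) = (k : ℚ) * ((k : ℚ) + 1) ∧
      b (4 * k + 2) = 2 * (k : ℚ) + 4 ∧ a (4 * k + 2) = ((k : ℚ) + 1) * ((k : ℚ) + 2))
    (h2 : ∀ k : ℕ,
      b (4 * k + 3) = 2 * (k : ℚ) + 3 ∧ a (4 * k + 3) = ((k : ℚ) + 1) ^ 2 ∧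
      b (4 * k + 4) = 2 * (k : ℚ) + 2 ∧ a (4 * k + 4) = ((k : ℚ) + 2) ^ 2)
    (hA : ∀ ν : ℕ, A ν = !![0, 1; a (ν + 1), b (ν + 1)]) :
    ∀ k : ℕ, 2 ≤ k →
      A (4 * k - 3) * A (4 * k - 4) * A (4 * k - 5) * A (4 * k - 6) =
        !![5 * (k : ℚ) * ((k : ℚ) - 1) ^ 3,
             (k : ℚ) * (12 * (k : ℚ) ^ 2 - 15 * (k : ℚ) + 5);
           12 * (k : ℚ) * ((k : ℚ) + 1) * ((k : ℚ) - 1) ^ 3,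
             (k : ℚ) * ((k : ℚ) + 1) * (29 * (k : ℚ) ^ 2 - 36 * (k : ℚ) + 12)] := by
  intro k hk
  obtain ⟨m, rfl⟩ : ∃ m, k = m + 2 := ⟨k - 2, by omega⟩
  obtain ⟨hb5, ha5, hb6, ha6⟩ := h1 (m + 1) le_add_self
  obtain ⟨hb3, ha3, hb4, ha4⟩ := h2 m
  rw [show 4 * (m + 2) - 3 = 4 * (m + 1) + 1 by omega, show 4 * (m + 2) - 4 = 4 * m + 4 by omega,
    show 4 * (m + 2) - 5 = 4 * m + 3 by omega, show 4 * (m + 2) - 6 = 4 * m + 2 by omega,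
    hA, hA, hA, hA, show 4 * m + 4 + 1 = 4 * (m + 1) + 1 by ring,
    ha6, hb6, ha5, hb5, ha4, hb4, ha3, hb3,
    Matrix.mul_assoc, Matrix.companion_mul, Matrix.companion_mul, Matrix.mul_fin_two]
  push_cast
  ext i j
  fin_cases i <;> fin_cases j <;> dsimp <;> ring

/-- For `k ≥ 2`, the product `B^∧_k = A^∧_{4k−3} A^∧_{4k−4} A^∧_{4k−5} A^∧_{4k−6}` of the
matrices `A^∧_ν = [[0,1],[a^∧_{ν+1}, b^∧_{ν+1}]]` built from Nesterenko's continued fraction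
coefficients equals the stated 2×2 matrix. -/
theorem stmt_3 (a b : ℕ → ℚ) (A : ℕ → Matrix (Fin 2) (Fin 2) ℚ)
    (hb0 : b 0 = 1) (ha1 : a 1 = 1) (hb1 : b 1 = 4) (ha2 : a 2 = 4) (hb2 : b 2 = 4)
    (h1 : ∀ k : ℕ, 1 ≤ k →
      b (4 * k + 1) = 2 * (k : ℚ) + 2 ∧ a (4 * k + 1) = (k : ℚ) * ((k : ℚ) + 1) ∧
      b (4 * k + 2) = 2 * (k : ℚ) + 4 ∧ a (4 * k + 2) = ((k : ℚ) + 1) * ((k : ℚ) + 2))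
    (h2 : ∀ k : ℕ,
      b (4 * k + 3) = 2 * (k : ℚ) + 3 ∧ a (4 * k + 3) = ((k : ℚ) + 1) ^ 2 ∧
      b (4 * k + 4) = 2 * (k : ℚ) + 2 ∧ a (4 * k + 4) = ((k : ℚ) + 2) ^ 2)
    (hA : ∀ ν : ℕ, A ν = !![0, 1; a (ν + 1), b (ν + 1)]) :
    ∀ k : ℕ, 2 ≤ k →
      A (4 * k - 3) * A (4 * k - 4) * A (4 * k - 5) * A (4 * k - 6) =
        !![5 * (k : ℚ) * ((k : ℚ) - 1) ^ 3,
             (k : ℚ) * (12 * (k : ℚ) ^ 2 - 15 * (k : ℚ) + 5);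
           12 * (k : ℚ) * ((k : ℚ) + 1) * ((k : ℚ) - 1) ^ 3,
             (k : ℚ) * ((k : ℚ) + 1) * (29 * (k : ℚ) ^ 2 - 36 * (k : ℚ) + 12)] :=
  stmt_3_general a b A h1 h2 hA
end

section
/- For every integer k ≥ 3, A^∨_{k−1} · H_{k−1} = H_k · B^∧_k as 2×2 rational matrices, where A^∨_{k−1} has rows (0, 1) and (−(k−1)⁶, 34k³−51k²+27k−5), and B^∧_k has rows (5k(k−1)³, k(12k²−15k+5)) and (12k(k+1)(k−1)³, k(k+1)(29k²−36k+12)). -/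
/-!
Up to the scalar `(2 k³ (k+1)!)⁻¹`, `H_k` is the polynomial matrix `hNum k = [[-12(k+1), 5], [0, k³]]`.
Comparing the scalars `(2 (k-1)³ k!)⁻¹` and `(2 k³ (k+1)!)⁻¹` of `H_{k-1}` and `H_k`, the claim becomes
the polynomial identity `(k+1) k³ · A(k) hNum(k-1) = (k-1)³ · hNum(k) B(k)`, which holds in every
commutative ring.
-/

section

variable {R : Type*} [CommRing R]

def aVee (k : R) : Matrix (Fin 2) (Fin 2) R :=
  !![0, 1; -(k - 1) ^ 6, 34 * k ^ 3 - 51 * k ^ 2 + 27 * k - 5]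

def bHat (k : R) : Matrix (Fin 2) (Fin 2) R :=
  !![5 * k * (k - 1) ^ 3, k * (12 * k ^ 2 - 15 * k + 5);
     12 * k * (k + 1) * (k - 1) ^ 3, k * (k + 1) * (29 * k ^ 2 - 36 * k + 12)]

def hNum (k : R) : Matrix (Fin 2) (Fin 2) R :=
  !![-12 * (k + 1), 5; 0, k ^ 3]

theorem aVee_mul_hNum_sub_one (k : R) :
    ((k + 1) * k ^ 3) • (aVee k * hNum (k - 1)) = (k - 1) ^ 3 • (hNum k * bHat k) := by
  ext i j
  fin_cases i <;> fin_cases j <;>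
    simp [aVee, bHat, hNum] <;> ring

end

theorem H_eq_smul_hNum (c : ℕ → ℚ) (H : ℕ → Matrix (Fin 2) (Fin 2) ℚ)
    (hc : ∀ k : ℕ, 2 ≤ k →
      c k = (-2 * ((k : ℚ) - 1) ^ 3 * (Nat.factorial (k + 1) : ℚ))⁻¹)
    (hH : ∀ k : ℕ, 2 ≤ k → H k =
      !![12 * ((k : ℚ) + 2) * ((k : ℚ) + 1) * c (k + 1), -5 * ((k : ℚ) + 2) * c (k + 1);
         0, -((k : ℚ) - 1) ^ 3 * c k])
    {k : ℕ} (hk : 2 ≤ k) :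
    H k = (2 * (k : ℚ) ^ 3 * (k + 1).factorial)⁻¹ • hNum (k : ℚ) := by
  have hk1 : (k : ℚ) - 1 ≠ 0 := sub_ne_zero.mpr (by exact_mod_cast (by omega : k ≠ 1))
  have hk0 : (k : ℚ) ≠ 0 := by exact_mod_cast (by omega : k ≠ 0)
  have hfact : ((k + 2).factorial : ℚ) = (k + 2) * (k + 1).factorial := by
    push_cast [Nat.factorial_succ]; ring
  rw [hH k hk, hc k hk, hc (k + 1) (by omega)]
  push_cast
  rw [add_sub_cancel_right, show k + 1 + 1 = k + 2 from rfl, hfact]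
  ext i j
  fin_cases i <;> fin_cases j <;> simp [hNum] <;> field_simp

theorem stmt_4_general (c : ℕ → ℚ) (H : ℕ → Matrix (Fin 2) (Fin 2) ℚ)
    (hc : ∀ k : ℕ, 2 ≤ k →
      c k = (-2 * ((k : ℚ) - 1) ^ 3 * (Nat.factorial (k + 1) : ℚ))⁻¹)
    (hH : ∀ k : ℕ, 2 ≤ k → H k =
      !![12 * ((k : ℚ) + 2) * ((k : ℚ) + 1) * c (k + 1), -5 * ((k : ℚ) + 2) * c (k + 1);
         0, -((k : ℚ) - 1) ^ 3 * c k]) :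
    ∀ k : ℕ, 3 ≤ k →
      !![0, 1;
         -((k : ℚ) - 1) ^ 6, 34 * (k : ℚ) ^ 3 - 51 * (k : ℚ) ^ 2 + 27 * (k : ℚ) - 5] * H (k - 1) =
      H k *
        !![5 * (k : ℚ) * ((k : ℚ) - 1) ^ 3,
             (k : ℚ) * (12 * (k : ℚ) ^ 2 - 15 * (k : ℚ) + 5);
           12 * (k : ℚ) * ((k : ℚ) + 1) * ((k : ℚ) - 1) ^ 3,
             (k : ℚ) * ((k : ℚ) + 1) * (29 * (k : ℚ) ^ 2 - 36 * (k : ℚ) + 12)] := by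
  intro k hk
  obtain ⟨n, rfl⟩ : ∃ n, k = n + 1 := ⟨k - 1, by omega⟩
  change aVee _ * H n = H (n + 1) * bHat _
  rw [H_eq_smul_hNum c H hc hH (by omega), H_eq_smul_hNum c H hc hH (by omega),
    mul_smul_comm, smul_mul_assoc]
  have hn : (n : ℚ) ≠ 0 := by exact_mod_cast (by omega : n ≠ 0)
  have hpoly := aVee_mul_hNum_sub_one ((n + 1 : ℕ) : ℚ)
  push_cast at hpoly ⊢
  rw [add_sub_cancel_right] at hpoly
  rw [← inv_smul_smul₀ (by positivity : ((n : ℚ) + 1 + 1) * (n + 1) ^ 3 ≠ 0) (aVee _ * _), hpoly,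
    smul_smul, smul_smul, Nat.factorial_succ (n + 1)]
  congr 1
  push_cast
  field_simp

/-- For `k ≥ 3`, `A^∨_{k−1} · H_{k−1} = H_k · B^∧_k`, where
`A^∨_{k−1} = [[0,1],[−(k−1)⁶, 34k³−51k²+27k−5]]`,
`H₁ = (1/4)·[[−24,5],[0,1]]`, `H_k = [[12(k+2)(k+1)c(k+1), −5(k+2)c(k+1)],[0, −(k−1)³c(k)]]`
with `c(k) = (−2(k−1)³(k+1)!)⁻¹`, and `B^∧_k` is the stated explicit matrix. -/
theorem stmt_4 (c : ℕ → ℚ) (H : ℕ → Matrix (Fin 2) (Fin 2) ℚ)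
    (hc : ∀ k : ℕ, 2 ≤ k →
      c k = (-2 * ((k : ℚ) - 1) ^ 3 * (Nat.factorial (k + 1) : ℚ))⁻¹)
    (hH1 : H 1 = (1 / 4 : ℚ) • !![-24, 5; 0, 1])
    (hH : ∀ k : ℕ, 2 ≤ k → H k =
      !![12 * ((k : ℚ) + 2) * ((k : ℚ) + 1) * c (k + 1), -5 * ((k : ℚ) + 2) * c (k + 1);
         0, -((k : ℚ) - 1) ^ 3 * c k]) :
    ∀ k : ℕ, 3 ≤ k →
      !![0, 1;
         -((k : ℚ) - 1) ^ 6, 34 * (k : ℚ) ^ 3 - 51 * (k : ℚ) ^ 2 + 27 * (k : ℚ) - 5] * H (k - 1) =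
      H k *
        !![5 * (k : ℚ) * ((k : ℚ) - 1) ^ 3,
             (k : ℚ) * (12 * (k : ℚ) ^ 2 - 15 * (k : ℚ) + 5);
           12 * (k : ℚ) * ((k : ℚ) + 1) * ((k : ℚ) - 1) ^ 3,
             (k : ℚ) * ((k : ℚ) + 1) * (29 * (k : ℚ) ^ 2 - 36 * (k : ℚ) + 12)] :=
  stmt_4_general c H hc hH
end

section
/- For every integer k ≥ 1, U^∨_k = H_k · U^∧_{4k−2}, where U^∨_ν is the 2×2 matrix with rows (P^∨_{ν−1}, Q^∨_{ν−1}), (P^∨_ν, Q^∨_ν) and U^∧_ν is the 2×2 matrix with rows (P^∧_{ν−1}, Q^∧_{ν−1}), (P^∧_ν, Q^∧_ν). -/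
/-!
Both convergent matrices advance by left multiplication with companion matrices of their
recurrences: `U^∨_{k+1} = A_k U^∨_k`, and `U^∧_{4k+2} = B_k U^∧_{4k-2}` where `B_k` is the
product of four Nesterenko steps. In closed form
`H_k = (2 k³ (k+1)!)⁻¹ [[-12(k+1), 5], [0, k³]]`, and the intertwining relation
`H_{k+1} B_k = A_k H_k` then reduces to a polynomial identity in `k`. Induction on `k` from
the case `k = 1` gives the theorem.
-/

open Matrix

section ConvergentMatrices

variable {R : Type*} [CommRing R]

def convMatrix (P Q : ℤ → R) (ν : ℤ) : Matrix (Fin 2) (Fin 2) R :=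
  !![P (ν - 1), Q (ν - 1); P ν, Q ν]

def stepMatrix (a b : R) : Matrix (Fin 2) (Fin 2) R := !![0, 1; a, b]

theorem convMatrix_add_one {a b P Q : ℤ → R} {ν : ℤ}
    (hP : P (ν + 1) = b (ν + 1) * P ν + a (ν + 1) * P (ν - 1))
    (hQ : Q (ν + 1) = b (ν + 1) * Q ν + a (ν + 1) * Q (ν - 1)) :
    convMatrix P Q (ν + 1) = stepMatrix (a (ν + 1)) (b (ν + 1)) * convMatrix P Q ν := by
  rw [convMatrix, convMatrix, stepMatrix, mul_fin_two, add_sub_cancel_right, hP, hQ]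
  simp only [zero_mul, one_mul, zero_add]
  ring_nf

/-- The steps `ν = 4k - 1, 4k, 4k + 1, 4k + 2` of the recurrence of `a^∧, b^∧`. -/
def nesterenkoBlock (k : R) : Matrix (Fin 2) (Fin 2) R :=
  stepMatrix ((k + 1) * (k + 2)) (2 * k + 4) * stepMatrix (k * (k + 1)) (2 * k + 2) *
    stepMatrix ((k + 1) ^ 2) (2 * k) * stepMatrix (k ^ 2) (2 * k + 1)

def aperyStep (k : R) : Matrix (Fin 2) (Fin 2) R :=
  stepMatrix (-k ^ 6) (34 * k ^ 3 + 51 * k ^ 2 + 27 * k + 5)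

def transitionCore (k : R) : Matrix (Fin 2) (Fin 2) R := !![-12 * (k + 1), 5; 0, k ^ 3]

theorem smul_transitionCore_mul_nesterenkoBlock (k : R) :
    k ^ 3 • (transitionCore (k + 1) * nesterenkoBlock k) =
      ((k + 1) ^ 3 * (k + 2)) • (aperyStep k * transitionCore k) := by
  simp only [transitionCore, nesterenkoBlock, aperyStep, stepMatrix, mul_fin_two, smul_of,
    smul_cons, smul_empty, smul_eq_mul]
  ring_nf

end ConvergentMatrices

theorem eq_mul_of_intertwining {M : Type*} [Semigroup M] {U V H A B : ℕ → M}
    (h₁ : V 1 = H 1 * U 1) (hV : ∀ k, 1 ≤ k → V (k + 1) = A k * V k)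
    (hU : ∀ k, 1 ≤ k → U (k + 1) = B k * U k)
    (hH : ∀ k, 1 ≤ k → H (k + 1) * B k = A k * H k) :
    ∀ k, 1 ≤ k → V k = H k * U k := by
  intro k hk
  induction k, hk using Nat.le_induction with
  | base => exact h₁
  | succ k hk ih => rw [hV k hk, ih, hU k hk, ← mul_assoc, ← mul_assoc, hH k hk]

theorem eq_nesterenkoBlock_mul {ah bh : ℤ → ℚ} {U : ℤ → Matrix (Fin 2) (Fin 2) ℚ}
    (hh1 : ∀ k : ℤ, 1 ≤ k →
      bh (4 * k + 1) = 2 * (k : ℚ) + 2 ∧ ah (4 * k + 1) = (k : ℚ) * ((k : ℚ) + 1) ∧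
      bh (4 * k + 2) = 2 * (k : ℚ) + 4 ∧ ah (4 * k + 2) = ((k : ℚ) + 1) * ((k : ℚ) + 2))
    (hh2 : ∀ k : ℤ, 0 ≤ k →
      bh (4 * k + 3) = 2 * (k : ℚ) + 3 ∧ ah (4 * k + 3) = ((k : ℚ) + 1) ^ 2 ∧
      bh (4 * k + 4) = 2 * (k : ℚ) + 2 ∧ ah (4 * k + 4) = ((k : ℚ) + 2) ^ 2)
    (hU : ∀ ν : ℤ, 0 ≤ ν → U (ν + 1) = stepMatrix (ah (ν + 1)) (bh (ν + 1)) * U ν)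
    {k : ℤ} (hk : 1 ≤ k) :
    U (4 * k + 2) = nesterenkoBlock (k : ℚ) * U (4 * k - 2) := by
  obtain ⟨hb₁, ha₁, hb₂, ha₂⟩ := hh1 k hk
  obtain ⟨hb₃, ha₃, hb₄, ha₄⟩ := hh2 (k - 1) (by omega)
  set n := 4 * k - 2
  rw [show 4 * k + 1 = n + 1 + 1 + 1 by omega] at hb₁ ha₁
  rw [show 4 * k + 2 = n + 1 + 1 + 1 + 1 by omega] at hb₂ ha₂ ⊢
  rw [show 4 * (k - 1) + 3 = n + 1 by omega] at hb₃ ha₃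
  rw [show 4 * (k - 1) + 4 = n + 1 + 1 by omega] at hb₄ ha₄
  rw [hU _ (by omega), hU _ (by omega), hU _ (by omega), hU _ (by omega)]
  simp only [hb₁, ha₁, hb₂, ha₂, hb₃, ha₃, hb₄, ha₄, nesterenkoBlock, mul_assoc]
  push_cast
  ring_nf

def transitionScale (k : ℕ) : ℚ := (2 * (k : ℚ) ^ 3 * (k + 1).factorial)⁻¹

theorem transitionScale_succ_mul {k : ℕ} (hk : k ≠ 0) :
    transitionScale (k + 1) * (((k : ℚ) + 1) ^ 3 * ((k : ℚ) + 2)) =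
      transitionScale k * (k : ℚ) ^ 3 := by
  have hk' : (k : ℚ) ≠ 0 := Nat.cast_ne_zero.2 hk
  rw [transitionScale, transitionScale, Nat.factorial_succ (k + 1)]
  push_cast
  field_simp
  ring

def transitionMatrix (k : ℕ) : Matrix (Fin 2) (Fin 2) ℚ :=
  transitionScale k • transitionCore (k : ℚ)

theorem transitionMatrix_succ_mul_nesterenkoBlock {k : ℕ} (hk : k ≠ 0) :
    transitionMatrix (k + 1) * nesterenkoBlock (k : ℚ) =
      aperyStep (k : ℚ) * transitionMatrix k := by
  have hk3 : (k : ℚ) ^ 3 ≠ 0 := pow_ne_zero 3 (Nat.cast_ne_zero.2 hk)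
  rw [transitionMatrix, transitionMatrix, smul_mul_assoc, mul_smul_comm, Nat.cast_succ]
  calc transitionScale (k + 1) • (transitionCore ((k : ℚ) + 1) * nesterenkoBlock (k : ℚ))
      = (transitionScale (k + 1) / (k : ℚ) ^ 3) •
          ((k : ℚ) ^ 3 • (transitionCore ((k : ℚ) + 1) * nesterenkoBlock (k : ℚ))) := by
        rw [smul_smul, div_mul_cancel₀ _ hk3]
    _ = transitionScale k • (aperyStep (k : ℚ) * transitionCore (k : ℚ)) := by
        rw [smul_transitionCore_mul_nesterenkoBlock, smul_smul, div_mul_eq_mul_div,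
          transitionScale_succ_mul hk, mul_div_cancel_right₀ _ hk3]

theorem eq_transitionMatrix {c : ℕ → ℚ} {H : ℕ → Matrix (Fin 2) (Fin 2) ℚ}
    (hc : ∀ k : ℕ, 2 ≤ k →
      c k = (-2 * ((k : ℚ) - 1) ^ 3 * (Nat.factorial (k + 1) : ℚ))⁻¹)
    (hH1 : H 1 = (1 / 4 : ℚ) • !![-24, 5; 0, 1])
    (hH : ∀ k : ℕ, 2 ≤ k → H k =
      !![12 * ((k : ℚ) + 2) * ((k : ℚ) + 1) * c (k + 1), -5 * ((k : ℚ) + 2) * c (k + 1);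
         0, -((k : ℚ) - 1) ^ 3 * c k])
    {k : ℕ} (hk : 1 ≤ k) :
    H k = transitionMatrix k := by
  obtain rfl | hk2 := eq_or_lt_of_le hk
  · rw [hH1, transitionMatrix, transitionScale, transitionCore]
    norm_num [Nat.factorial]
  · have hk0 : (k : ℚ) ≠ 0 := by positivity
    have hk1 : (k : ℚ) - 1 ≠ 0 := sub_ne_zero.2 (by exact_mod_cast hk2.ne')
    rw [hH k hk2, hc k hk2, hc (k + 1) (by omega), transitionMatrix, transitionScale,
      transitionCore, Nat.factorial_succ (k + 1)]
    ext i j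
    fin_cases i <;> fin_cases j <;>
      simp only [Fin.isValue, Fin.zero_eta, Fin.mk_one, Matrix.smul_apply, of_apply, cons_val',
        cons_val_zero, cons_val_one, cons_val_fin_one, smul_eq_mul, Nat.cast_add, Nat.cast_one,
        Nat.cast_mul, add_sub_cancel_right] <;> field_simp <;> ring

/-- For every `k ≥ 1`, `U^∨_k = H_k · U^∧_{4k−2}`, where `U^∨_ν`, `U^∧_ν` are the 2×2
matrices of consecutive convergent numerators/denominators of the continued fractions
with coefficients `a^∨, b^∨` and `a^∧, b^∧` respectively, and `H_k` is the transition
matrix built from `c(k) = (−2(k−1)³(k+1)!)⁻¹`. -/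
theorem stmt_5
    -- Nesterenko coefficients a^∧, b^∧ and their convergents P^∧, Q^∧
    (ah bh Ph Qh : ℤ → ℚ)
    (hbh0 : bh 0 = 1) (hah1 : ah 1 = 1) (hbh1 : bh 1 = 4) (hah2 : ah 2 = 4) (hbh2 : bh 2 = 4)
    (hh1 : ∀ k : ℤ, 1 ≤ k →
      bh (4 * k + 1) = 2 * (k : ℚ) + 2 ∧ ah (4 * k + 1) = (k : ℚ) * ((k : ℚ) + 1) ∧
      bh (4 * k + 2) = 2 * (k : ℚ) + 4 ∧ ah (4 * k + 2) = ((k : ℚ) + 1) * ((k : ℚ) + 2))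
    (hh2 : ∀ k : ℤ, 0 ≤ k →
      bh (4 * k + 3) = 2 * (k : ℚ) + 3 ∧ ah (4 * k + 3) = ((k : ℚ) + 1) ^ 2 ∧
      bh (4 * k + 4) = 2 * (k : ℚ) + 2 ∧ ah (4 * k + 4) = ((k : ℚ) + 2) ^ 2)
    (hPhm : Ph (-1) = 1) (hQhm : Qh (-1) = 0) (hPh0 : Ph 0 = bh 0) (hQh0 : Qh 0 = 1)
    (hPhrec : ∀ ν : ℤ, 0 ≤ ν → Ph (ν + 1) = bh (ν + 1) * Ph ν + ah (ν + 1) * Ph (ν - 1))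
    (hQhrec : ∀ ν : ℤ, 0 ≤ ν → Qh (ν + 1) = bh (ν + 1) * Qh ν + ah (ν + 1) * Qh (ν - 1))
    -- Apéry coefficients a^∨, b^∨ and their convergents P^∨, Q^∨
    (av bv Pv Qv : ℤ → ℚ)
    (hbv0 : bv 0 = 0) (hbv1 : bv 1 = 5) (hav1 : av 1 = 6)
    (hv : ∀ ν : ℤ, 1 ≤ ν →
      bv (ν + 1) = 34 * (ν : ℚ) ^ 3 + 51 * (ν : ℚ) ^ 2 + 27 * (ν : ℚ) + 5 ∧
      av (ν + 1) = -(ν : ℚ) ^ 6)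
    (hPvm : Pv (-1) = 1) (hQvm : Qv (-1) = 0) (hPv0 : Pv 0 = bv 0) (hQv0 : Qv 0 = 1)
    (hPvrec : ∀ ν : ℤ, 0 ≤ ν → Pv (ν + 1) = bv (ν + 1) * Pv ν + av (ν + 1) * Pv (ν - 1))
    (hQvrec : ∀ ν : ℤ, 0 ≤ ν → Qv (ν + 1) = bv (ν + 1) * Qv ν + av (ν + 1) * Qv (ν - 1))
    -- the matrices H_k
    (c : ℕ → ℚ) (H : ℕ → Matrix (Fin 2) (Fin 2) ℚ)
    (hc : ∀ k : ℕ, 2 ≤ k →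
      c k = (-2 * ((k : ℚ) - 1) ^ 3 * (Nat.factorial (k + 1) : ℚ))⁻¹)
    (hH1 : H 1 = (1 / 4 : ℚ) • !![-24, 5; 0, 1])
    (hH : ∀ k : ℕ, 2 ≤ k → H k =
      !![12 * ((k : ℚ) + 2) * ((k : ℚ) + 1) * c (k + 1), -5 * ((k : ℚ) + 2) * c (k + 1);
         0, -((k : ℚ) - 1) ^ 3 * c k]) :
    ∀ k : ℕ, 1 ≤ k →
      !![Pv ((k : ℤ) - 1), Qv ((k : ℤ) - 1); Pv (k : ℤ), Qv (k : ℤ)] =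
        H k * !![Ph (4 * (k : ℤ) - 3), Qh (4 * (k : ℤ) - 3);
                 Ph (4 * (k : ℤ) - 2), Qh (4 * (k : ℤ) - 2)] := by
  have stepH : ∀ ν : ℤ, 0 ≤ ν →
      convMatrix Ph Qh (ν + 1) = stepMatrix (ah (ν + 1)) (bh (ν + 1)) * convMatrix Ph Qh ν :=
    fun ν hν => convMatrix_add_one (hPhrec ν hν) (hQhrec ν hν)
  have stepV : ∀ ν : ℤ, 0 ≤ ν →
      convMatrix Pv Qv (ν + 1) = stepMatrix (av (ν + 1)) (bv (ν + 1)) * convMatrix Pv Qv ν :=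
    fun ν hν => convMatrix_add_one (hPvrec ν hν) (hQvrec ν hν)
  have base : convMatrix Pv Qv 1 = H 1 * convMatrix Ph Qh (4 * 1 - 2) := by
    rw [show (1 : ℤ) = 0 + 1 from rfl, stepV 0 le_rfl,
      show (4 * (0 + 1) - 2 : ℤ) = 0 + 1 + 1 from rfl, stepH (0 + 1) (by norm_num),
      stepH 0 le_rfl, hH1]
    norm_num [convMatrix, stepMatrix, hPhm, hQhm, hPh0, hQh0, hPvm, hQvm, hPv0, hQv0, hbh0,
      hah1, hbh1, hah2, hbh2, hbv0, hbv1, hav1]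
  intro k hk
  have key := eq_mul_of_intertwining (V := fun k : ℕ => convMatrix Pv Qv k)
    (U := fun k : ℕ => convMatrix Ph Qh (4 * k - 2)) (A := fun k : ℕ => aperyStep (k : ℚ))
    (B := fun k : ℕ => nesterenkoBlock (k : ℚ)) (H := H) base ?_ ?_ ?_ k hk
  · simpa [convMatrix, show 4 * (k : ℤ) - 2 - 1 = 4 * k - 3 by ring] using key
  · intro k hk
    obtain ⟨hb, ha⟩ := hv k (by exact_mod_cast hk)
    push_cast at hb ha ⊢
    rw [stepV k (by positivity), hb, ha, aperyStep]
  · intro k hk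
    have h := eq_nesterenkoBlock_mul hh1 hh2 stepH (k := k) (by exact_mod_cast hk)
    push_cast at h ⊢
    rwa [show 4 * ((k : ℤ) + 1) - 2 = 4 * k + 2 by ring]
  · intro k hk
    rw [eq_transitionMatrix hc hH1 hH hk, eq_transitionMatrix hc hH1 hH (by omega : 1 ≤ k + 1)]
    exact transitionMatrix_succ_mul_nesterenkoBlock (by omega)
end

section
/- For every integer k ≥ 2, P^∨_k = P^∧_{4k−2}/(2·(k+1)!) and Q^∨_k = Q^∧_{4k−2}/(2·(k+1)!). -/
/-!
Grouping the steps of the recurrence with coefficients `a^∧, b^∧` four at a time writes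
`(x_{4k+6}, x_{4k+5})` as a polynomial matrix times `(x_{4k+2}, x_{4k+1})`. Composing two
consecutive such matrices and eliminating `x_{4k+1}` gives a three-term recurrence for `x_{4k+2}`
alone which, after division by `2 (k+2)!`, is exactly the recurrence with coefficients
`a^∨, b^∨`. The initial values match, so the two sequences coincide.
-/

open Nat

theorem eq_of_two_step_recurrence {α : Type*} {f g : ℕ → α} (F : ℕ → α → α → α)
    (hf : ∀ n, f (n + 2) = F n (f n) (f (n + 1))) (hg : ∀ n, g (n + 2) = F n (g n) (g (n + 1)))
    (h0 : f 0 = g 0) (h1 : f 1 = g 1) : f = g := by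
  suffices h : ∀ n, f n = g n ∧ f (n + 1) = g (n + 1) from funext fun n => (h n).1
  intro n
  induction n with
  | zero => exact ⟨h0, h1⟩
  | succ n ih => exact ⟨ih.2, by rw [hf, hg, ih.1, ih.2]⟩

def ContinuantRec (a b x : ℤ → ℚ) : Prop :=
  ∀ ν : ℤ, 0 ≤ ν → x (ν + 1) = b (ν + 1) * x ν + a (ν + 1) * x (ν - 1)

def HatCoeffs (a b : ℤ → ℚ) : Prop :=
  a 1 = 1 ∧ b 1 = 4 ∧ a 2 = 4 ∧ b 2 = 4 ∧
  (∀ k : ℤ, 1 ≤ k →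
    b (4 * k + 1) = 2 * (k : ℚ) + 2 ∧ a (4 * k + 1) = (k : ℚ) * ((k : ℚ) + 1) ∧
    b (4 * k + 2) = 2 * (k : ℚ) + 4 ∧ a (4 * k + 2) = ((k : ℚ) + 1) * ((k : ℚ) + 2)) ∧
  (∀ k : ℤ, 0 ≤ k →
    b (4 * k + 3) = 2 * (k : ℚ) + 3 ∧ a (4 * k + 3) = ((k : ℚ) + 1) ^ 2 ∧
    b (4 * k + 4) = 2 * (k : ℚ) + 2 ∧ a (4 * k + 4) = ((k : ℚ) + 2) ^ 2)

/-- `bVee ν` is `b^∨_{ν+1}`. -/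
def bVee (ν : ℚ) : ℚ := 34 * ν ^ 3 + 51 * ν ^ 2 + 27 * ν + 5

def VeeCoeffs (a b : ℤ → ℚ) : Prop :=
  b 1 = 5 ∧ a 1 = 6 ∧ ∀ ν : ℤ, 1 ≤ ν → b (ν + 1) = bVee ν ∧ a (ν + 1) = -(ν : ℚ) ^ 6

/-- Indexed so that it matches `x^∨_{n+1}` and both recurrences hold from `n = 0` on. -/
def hatScaled (x : ℤ → ℚ) (n : ℕ) : ℚ := x (4 * n + 2) / (2 * (n + 2)! : ℚ)

namespace ContinuantRec

variable {a b x : ℤ → ℚ}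

theorem eq_of_index (hx : ContinuantRec a b x) {i j l : ℤ} (hj : 0 ≤ j) (hi : i = j + 1)
    (hl : l = j - 1) : x i = b i * x j + a i * x l := by
  subst hi hl
  exact hx j hj

theorem hat_four_step (hab : HatCoeffs a b) (hx : ContinuantRec a b x) {k : ℤ} (hk : 0 ≤ k) :
    x (4 * k + 5) = (12 * k ^ 3 + 57 * k ^ 2 + 89 * k + 46) * x (4 * k + 2)
        + 5 * (k + 1) ^ 3 * (k + 2) * x (4 * k + 1) ∧
    x (4 * k + 6) = (29 * k ^ 4 + 225 * k ^ 3 + 630 * k ^ 2 + 760 * k + 336) * x (4 * k + 2)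
        + 12 * (k + 1) ^ 3 * (k + 2) * (k + 3) * x (4 * k + 1) := by
  obtain ⟨-, -, -, -, hodd, heven⟩ := hab
  obtain ⟨hb3, ha3, hb4, ha4⟩ := heven k hk
  obtain ⟨hb5, ha5, hb6, ha6⟩ := hodd (k + 1) (by omega)
  simp only [show 4 * (k + 1) + 1 = 4 * k + 5 by ring, show 4 * (k + 1) + 2 = 4 * k + 6 by ring,
    Int.cast_add, Int.cast_one] at hb5 ha5 hb6 ha6
  have s3 : x (4 * k + 3) = b (4 * k + 3) * x (4 * k + 2) + a (4 * k + 3) * x (4 * k + 1) :=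
    hx.eq_of_index (by omega) (by ring) (by ring)
  have s4 : x (4 * k + 4) = b (4 * k + 4) * x (4 * k + 3) + a (4 * k + 4) * x (4 * k + 2) :=
    hx.eq_of_index (by omega) (by ring) (by ring)
  have s5 : x (4 * k + 5) = b (4 * k + 5) * x (4 * k + 4) + a (4 * k + 5) * x (4 * k + 3) :=
    hx.eq_of_index (by omega) (by ring) (by ring)
  have s6 : x (4 * k + 6) = b (4 * k + 6) * x (4 * k + 5) + a (4 * k + 6) * x (4 * k + 4) :=
    hx.eq_of_index (by omega) (by ring) (by ring)
  rw [hb3, ha3] at s3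
  rw [hb4, ha4, s3] at s4
  rw [hb5, ha5, s4, s3] at s5
  rw [hb6, ha6, s5, s4] at s6
  constructor
  · rw [s5]; ring
  · rw [s6]; ring

theorem hat_contraction (hab : HatCoeffs a b) (hx : ContinuantRec a b x) {k : ℤ} (hk : 0 ≤ k) :
    x (4 * k + 10) = (k + 4) * bVee (k + 2) * x (4 * k + 6)
      - (k + 2) ^ 6 * (k + 3) * (k + 4) * x (4 * k + 2) := by
  obtain ⟨h5, h6⟩ := hx.hat_four_step hab hk
  obtain ⟨-, h10⟩ := hx.hat_four_step hab (k := k + 1) (by omega)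
  simp only [show 4 * (k + 1) + 6 = 4 * k + 10 by ring, show 4 * (k + 1) + 2 = 4 * k + 6 by ring,
    show 4 * (k + 1) + 1 = 4 * k + 5 by ring, Int.cast_add, Int.cast_one] at h10
  rw [h10, h5, h6, bVee]
  ring

theorem hatScaled_add_two (hab : HatCoeffs a b) (hx : ContinuantRec a b x) (n : ℕ) :
    hatScaled x (n + 2) = bVee (n + 2) * hatScaled x (n + 1) - (n + 2) ^ 6 * hatScaled x n := by
  have h := hx.hat_contraction hab (Int.natCast_nonneg n)
  simp only [hatScaled, Nat.factorial_succ]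
  push_cast at h ⊢
  rw [show 4 * ((n : ℤ) + 2) + 2 = 4 * n + 10 by ring,
    show 4 * ((n : ℤ) + 1) + 2 = 4 * n + 6 by ring, h]
  field_simp
  ring

theorem vee_add_three (hab : VeeCoeffs a b) (hx : ContinuantRec a b x) (n : ℕ) :
    x (n + 3) = bVee (n + 2) * x (n + 2) - (n + 2) ^ 6 * x (n + 1) := by
  obtain ⟨hb, ha⟩ := hab.2.2 (n + 2) (by omega)
  have h : x (n + 3) = b (n + 2 + 1) * x (n + 2) + a (n + 2 + 1) * x (n + 1) :=
    hx.eq_of_index (by omega) (by ring) (by ring)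
  rw [h, hb, ha]
  push_cast
  ring

theorem hat_two (hab : HatCoeffs a b) (hx : ContinuantRec a b x) :
    x 2 = 20 * x 0 + 4 * x (-1) := by
  obtain ⟨ha1, hb1, ha2, hb2, -⟩ := hab
  have h1 : x 1 = b 1 * x 0 + a 1 * x (-1) := hx.eq_of_index le_rfl (by norm_num) (by norm_num)
  have h2 : x 2 = b 2 * x 1 + a 2 * x 0 := hx.eq_of_index zero_le_one (by norm_num) (by norm_num)
  rw [h2, h1, ha1, hb1, ha2, hb2]
  ring

theorem hat_six (hab : HatCoeffs a b) (hx : ContinuantRec a b x) :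
    x 6 = 7008 * x 0 + 1416 * x (-1) := by
  have h1 : x 1 = b 1 * x 0 + a 1 * x (-1) := hx.eq_of_index le_rfl (by norm_num) (by norm_num)
  have h6 := (hx.hat_four_step hab le_rfl).2
  norm_num at h6
  rw [h6, hx.hat_two hab, h1, hab.1, hab.2.1]
  ring

theorem vee_one (hab : VeeCoeffs a b) (hx : ContinuantRec a b x) :
    x 1 = 5 * x 0 + 6 * x (-1) := by
  have h : x 1 = b 1 * x 0 + a 1 * x (-1) := hx.eq_of_index le_rfl (by norm_num) (by norm_num)
  rw [h, hab.1, hab.2.1]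

theorem vee_two (hab : VeeCoeffs a b) (hx : ContinuantRec a b x) :
    x 2 = 584 * x 0 + 702 * x (-1) := by
  obtain ⟨hb, ha⟩ := hab.2.2 1 le_rfl
  have h : x 2 = b (1 + 1) * x 1 + a (1 + 1) * x 0 :=
    hx.eq_of_index zero_le_one (by norm_num) (by norm_num)
  rw [h, hb, ha, hx.vee_one hab, bVee]
  ring

end ContinuantRec

theorem vee_eq_hat_div_factorial {ah bh av bv x w : ℤ → ℚ}
    (hh : HatCoeffs ah bh) (hx : ContinuantRec ah bh x)
    (hv : VeeCoeffs av bv) (hw : ContinuantRec av bv w)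
    (h0 : x 0 = w 0 + w (-1)) (hm : x (-1) = w (-1)) (k : ℕ) (hk : 1 ≤ k) :
    w k = x (4 * k - 2) / (2 * (k + 1)! : ℚ) := by
  have hshift : (fun n : ℕ => w (n + 1)) = hatScaled x :=
    eq_of_two_step_recurrence (fun n p q => bVee (n + 2) * q - (n + 2) ^ 6 * p)
      (fun n => by simpa [add_assoc] using hw.vee_add_three hv n)
      (hx.hatScaled_add_two hh)
      (by
        simp only [hatScaled, CharP.cast_eq_zero, mul_zero, zero_add, factorial_two, cast_ofNat,
          hx.hat_two hh, hw.vee_one hv, h0, hm]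
        ring)
      (by
        simp only [hatScaled, cast_one, mul_one, Int.reduceAdd, reduceAdd, hx.hat_six hh,
          hw.vee_two hv, h0, hm]
        ring)
  obtain ⟨n, rfl⟩ := Nat.exists_eq_add_of_le' hk
  have h := congrFun hshift n
  simp only [hatScaled] at h
  push_cast at h ⊢
  rw [h, show 4 * ((n : ℤ) + 1) - 2 = 4 * n + 2 by ring]

/-- For every `k ≥ 2`, `P^∨_k = P^∧_{4k−2}/(2(k+1)!)` and `Q^∨_k = Q^∧_{4k−2}/(2(k+1)!)`,
where `P^∧, Q^∧` (resp. `P^∨, Q^∨`) are the convergent numerators and denominators of the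
continued fractions with coefficients `a^∧, b^∧` (resp. `a^∨, b^∨`). -/
theorem stmt_6
    (ah bh Ph Qh : ℤ → ℚ)
    (hbh0 : bh 0 = 1) (hah1 : ah 1 = 1) (hbh1 : bh 1 = 4) (hah2 : ah 2 = 4) (hbh2 : bh 2 = 4)
    (hh1 : ∀ k : ℤ, 1 ≤ k →
      bh (4 * k + 1) = 2 * (k : ℚ) + 2 ∧ ah (4 * k + 1) = (k : ℚ) * ((k : ℚ) + 1) ∧
      bh (4 * k + 2) = 2 * (k : ℚ) + 4 ∧ ah (4 * k + 2) = ((k : ℚ) + 1) * ((k : ℚ) + 2))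
    (hh2 : ∀ k : ℤ, 0 ≤ k →
      bh (4 * k + 3) = 2 * (k : ℚ) + 3 ∧ ah (4 * k + 3) = ((k : ℚ) + 1) ^ 2 ∧
      bh (4 * k + 4) = 2 * (k : ℚ) + 2 ∧ ah (4 * k + 4) = ((k : ℚ) + 2) ^ 2)
    (hPhm : Ph (-1) = 1) (hQhm : Qh (-1) = 0) (hPh0 : Ph 0 = bh 0) (hQh0 : Qh 0 = 1)
    (hPhrec : ∀ ν : ℤ, 0 ≤ ν → Ph (ν + 1) = bh (ν + 1) * Ph ν + ah (ν + 1) * Ph (ν - 1))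
    (hQhrec : ∀ ν : ℤ, 0 ≤ ν → Qh (ν + 1) = bh (ν + 1) * Qh ν + ah (ν + 1) * Qh (ν - 1))
    (av bv Pv Qv : ℤ → ℚ)
    (hbv0 : bv 0 = 0) (hbv1 : bv 1 = 5) (hav1 : av 1 = 6)
    (hv : ∀ ν : ℤ, 1 ≤ ν →
      bv (ν + 1) = 34 * (ν : ℚ) ^ 3 + 51 * (ν : ℚ) ^ 2 + 27 * (ν : ℚ) + 5 ∧
      av (ν + 1) = -(ν : ℚ) ^ 6)
    (hPvm : Pv (-1) = 1) (hQvm : Qv (-1) = 0) (hPv0 : Pv 0 = bv 0) (hQv0 : Qv 0 = 1)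
    (hPvrec : ∀ ν : ℤ, 0 ≤ ν → Pv (ν + 1) = bv (ν + 1) * Pv ν + av (ν + 1) * Pv (ν - 1))
    (hQvrec : ∀ ν : ℤ, 0 ≤ ν → Qv (ν + 1) = bv (ν + 1) * Qv ν + av (ν + 1) * Qv (ν - 1)) :
    ∀ k : ℕ, 2 ≤ k →
      Pv (k : ℤ) = Ph (4 * (k : ℤ) - 2) / (2 * (Nat.factorial (k + 1) : ℚ)) ∧
      Qv (k : ℤ) = Qh (4 * (k : ℤ) - 2) / (2 * (Nat.factorial (k + 1) : ℚ)) := by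
  have hhat : HatCoeffs ah bh := ⟨hah1, hbh1, hah2, hbh2, hh1, hh2⟩
  have hvee : VeeCoeffs av bv := ⟨hbv1, hav1, hv⟩
  intro k hk
  constructor
  · exact vee_eq_hat_div_factorial hhat hPhrec hvee hPvrec
      (by rw [hPh0, hbh0, hPv0, hbv0, hPvm]; norm_num) (by rw [hPhm, hPvm]) k (by omega)
  · exact vee_eq_hat_div_factorial hhat hQhrec hvee hQvrec
      (by rw [hQh0, hQv0, hQvm]; norm_num) (by rw [hQhm, hQvm]) k (by omega)
end

section
/- For every integer ν ≥ 0, P^∨_ν = (ν!)³ · v_ν and Q^∨_ν = (ν!)³ · u_ν, where u, v are the Apéry sequences. -/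
/-!
Multiplying the Apéry recurrence `(ν+1)³ x_{ν+1} - b_ν x_ν + ν³ x_{ν-1} = 0` by `(ν!)³` turns it
into the monic recurrence `y_{ν+1} = b_ν y_ν - ν⁶ y_{ν-1}` for `y_ν = (ν!)³ x_ν`, which is the
convergent recurrence with coefficients `b^∨_{ν+1}, a^∨_{ν+1}`. So both sides of each identity
solve the same second-order recurrence, and they agree at `ν = 0, 1`.
-/

theorem eq_of_two_step_rec {α : Type*} (F : ℕ → α → α → α) {f g : ℕ → α}
    (hf : ∀ n, 1 ≤ n → f (n + 1) = F n (f n) (f (n - 1)))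
    (hg : ∀ n, 1 ≤ n → g (n + 1) = F n (g n) (g (n - 1)))
    (h0 : f 0 = g 0) (h1 : f 1 = g 1) : f = g := by
  funext n
  induction n using Nat.twoStepInduction with
  | zero => exact h0
  | one => exact h1
  | more n ihn ihn1 =>
    rw [hf (n + 1) n.succ_pos, hg (n + 1) n.succ_pos, Nat.add_sub_cancel, ihn, ihn1]

theorem factorial_cube_mul_of_apery_rec {R : Type*} [CommRing R] {b : ℕ → R} {x : ℕ → R} {n : ℕ}
    (hn : 1 ≤ n) (hx : ((n : R) + 1) ^ 3 * x (n + 1) - b n * x n + (n : R) ^ 3 * x (n - 1) = 0) :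
    ((n + 1).factorial : R) ^ 3 * x (n + 1) =
      b n * ((n.factorial : R) ^ 3 * x n) +
        -(n : R) ^ 6 * (((n - 1).factorial : R) ^ 3 * x (n - 1)) := by
  have hfac : (n.factorial : R) = n * (n - 1).factorial := by
    rw [← Nat.mul_factorial_pred (by omega : n ≠ 0)]; push_cast; ring
  rw [Nat.factorial_succ, Nat.cast_mul, hfac]
  push_cast
  linear_combination (n : R) ^ 3 * ((n - 1).factorial : R) ^ 3 * hx

theorem eq_factorial_cube_mul {R : Type*} [CommRing R] (b : ℕ → R) {x y : ℕ → R}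
    (hy : ∀ n : ℕ, 1 ≤ n → y (n + 1) = b n * y n + -(n : R) ^ 6 * y (n - 1))
    (hx : ∀ n : ℕ, 1 ≤ n →
      ((n : R) + 1) ^ 3 * x (n + 1) - b n * x n + (n : R) ^ 3 * x (n - 1) = 0)
    (h0 : y 0 = x 0) (h1 : y 1 = x 1) (n : ℕ) : y n = (n.factorial : R) ^ 3 * x n := by
  refine congrFun (eq_of_two_step_rec (fun n p q ↦ b n * p + -(n : R) ^ 6 * q)
    (g := fun n ↦ (n.factorial : R) ^ 3 * x n) hy
    (fun n hn ↦ factorial_cube_mul_of_apery_rec hn (hx n hn)) ?_ ?_) n <;> simpa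

/-- For every `ν ≥ 0`, `P^∨_ν = (ν!)³ v_ν` and `Q^∨_ν = (ν!)³ u_ν`, where `u, v` are the
Apéry sequences and `P^∨, Q^∨` are the convergents of the continued fraction with
coefficients `a^∨, b^∨`. -/
theorem stmt_7
    (av bv Pv Qv : ℤ → ℚ)
    (hbv0 : bv 0 = 0) (hbv1 : bv 1 = 5) (hav1 : av 1 = 6)
    (hv : ∀ ν : ℤ, 1 ≤ ν →
      bv (ν + 1) = 34 * (ν : ℚ) ^ 3 + 51 * (ν : ℚ) ^ 2 + 27 * (ν : ℚ) + 5 ∧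
      av (ν + 1) = -(ν : ℚ) ^ 6)
    (hPvm : Pv (-1) = 1) (hQvm : Qv (-1) = 0) (hPv0 : Pv 0 = bv 0) (hQv0 : Qv 0 = 1)
    (hPvrec : ∀ ν : ℤ, 0 ≤ ν → Pv (ν + 1) = bv (ν + 1) * Pv ν + av (ν + 1) * Pv (ν - 1))
    (hQvrec : ∀ ν : ℤ, 0 ≤ ν → Qv (ν + 1) = bv (ν + 1) * Qv ν + av (ν + 1) * Qv (ν - 1))
    -- the Apéry sequences u, v
    (u v : ℕ → ℚ)
    (hu0 : u 0 = 1) (hu1 : u 1 = 5) (hv0 : v 0 = 0) (hv1 : v 1 = 6)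
    (hurec : ∀ ν : ℕ, 1 ≤ ν →
      ((ν : ℚ) + 1) ^ 3 * u (ν + 1) -
        (34 * (ν : ℚ) ^ 3 + 51 * (ν : ℚ) ^ 2 + 27 * (ν : ℚ) + 5) * u ν +
        (ν : ℚ) ^ 3 * u (ν - 1) = 0)
    (hvrec : ∀ ν : ℕ, 1 ≤ ν →
      ((ν : ℚ) + 1) ^ 3 * v (ν + 1) -
        (34 * (ν : ℚ) ^ 3 + 51 * (ν : ℚ) ^ 2 + 27 * (ν : ℚ) + 5) * v ν +
        (ν : ℚ) ^ 3 * v (ν - 1) = 0) :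
    ∀ ν : ℕ, Pv (ν : ℤ) = (Nat.factorial ν : ℚ) ^ 3 * v ν ∧
      Qv (ν : ℤ) = (Nat.factorial ν : ℚ) ^ 3 * u ν := by
  set b : ℕ → ℚ := fun ν ↦ 34 * (ν : ℚ) ^ 3 + 51 * (ν : ℚ) ^ 2 + 27 * (ν : ℚ) + 5
  have convergent_rec (X : ℤ → ℚ)
      (hX : ∀ ν : ℤ, 0 ≤ ν → X (ν + 1) = bv (ν + 1) * X ν + av (ν + 1) * X (ν - 1))
      (n : ℕ) (hn : 1 ≤ n) :
      X ((n + 1 : ℕ) : ℤ) = b n * X (n : ℤ) + -(n : ℚ) ^ 6 * X ((n - 1 : ℕ) : ℤ) := by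
    obtain ⟨hb, ha⟩ := hv n (by omega)
    push_cast [hn] at hb ha ⊢
    rw [hX n (by omega), hb, ha]
  have hPv1 := hPvrec 0 le_rfl
  have hQv1 := hQvrec 0 le_rfl
  norm_num [hbv0, hbv1, hav1, hPvm, hQvm, hPv0, hQv0] at hPv1 hQv1
  intro ν
  constructor
  · exact eq_factorial_cube_mul b (y := fun n ↦ Pv n) (convergent_rec Pv hPvrec) hvrec
      (by simp [hPv0, hbv0, hv0]) (by simp [hv1, hPv1]) ν
  · exact eq_factorial_cube_mul b (y := fun n ↦ Qv n) (convergent_rec Qv hQvrec) hurec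
      (by simp [hQv0, hu0]) (by simp [hu1, hQv1]) ν
end

section
/- For every integer k ≥ 2, P^∧_{4k−2} = 2(k+1)(k!)⁴ · v_k and Q^∧_{4k−2} = 2(k+1)(k!)⁴ · u_k, where u, v are the Apéry sequences. -/
/-!
Four consecutive steps of the convergent recurrence, whose coefficients repeat with period 4
in the residue of the index, compose to a single step of Apéry's three-term recurrence once the
convergents are rescaled by `(n!)⁴`. Precisely, the pair `(x_{4n-3}, x_{4n-2})` is
`(n!)⁴ ((5 w_n - w_{n-1}) / 6, 2 (n + 1) w_n)` for every `n ≥ 1`, by induction on `n`; the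
initial values at `n = 1` match for `(P^∧, v)` and for `(Q^∧, u)`.
-/

open Nat

def ConvergentRec (a b x : ℤ → ℚ) : Prop :=
  ∀ ν : ℤ, 0 ≤ ν → x (ν + 1) = b (ν + 1) * x ν + a (ν + 1) * x (ν - 1)

def AperyRec (w : ℕ → ℚ) : Prop :=
  ∀ ν : ℕ, 1 ≤ ν →
    ((ν : ℚ) + 1) ^ 3 * w (ν + 1) -
      (34 * (ν : ℚ) ^ 3 + 51 * (ν : ℚ) ^ 2 + 27 * (ν : ℚ) + 5) * w ν +
      (ν : ℚ) ^ 3 * w (ν - 1) = 0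

def NesterenkoCoeffs (a b : ℤ → ℚ) : Prop :=
  (∀ k : ℤ, 1 ≤ k →
    b (4 * k + 1) = 2 * (k : ℚ) + 2 ∧ a (4 * k + 1) = (k : ℚ) * ((k : ℚ) + 1) ∧
    b (4 * k + 2) = 2 * (k : ℚ) + 4 ∧ a (4 * k + 2) = ((k : ℚ) + 1) * ((k : ℚ) + 2)) ∧
  (∀ k : ℤ, 0 ≤ k →
    b (4 * k + 3) = 2 * (k : ℚ) + 3 ∧ a (4 * k + 3) = ((k : ℚ) + 1) ^ 2 ∧
    b (4 * k + 4) = 2 * (k : ℚ) + 2 ∧ a (4 * k + 4) = ((k : ℚ) + 2) ^ 2)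

def MatchesApery (x : ℤ → ℚ) (w : ℕ → ℚ) (n : ℕ) : Prop :=
  x (4 * (n : ℤ) - 3) = (n ! : ℚ) ^ 4 * (5 * w n - w (n - 1)) / 6 ∧
  x (4 * (n : ℤ) - 2) = 2 * ((n : ℚ) + 1) * (n ! : ℚ) ^ 4 * w n

variable {a b x : ℤ → ℚ} {w : ℕ → ℚ}

theorem ConvergentRec.eq_of_eq_add (hx : ConvergentRec a b x) {i j k : ℤ} (hi : -1 ≤ i)
    (hj : j = i + 1) (hk : k = i + 2) : x k = b k * x j + a k * x i := by
  have h := hx j (by omega)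
  rwa [show j + 1 = k by omega, show j - 1 = i by omega] at h

theorem ConvergentRec.one_two (hx : ConvergentRec a b x) (hb1 : b 1 = 4) (ha1 : a 1 = 1)
    (hb2 : b 2 = 4) (ha2 : a 2 = 4) :
    x 1 = 4 * x 0 + x (-1) ∧ x 2 = 20 * x 0 + 4 * x (-1) := by
  have h1 := hx.eq_of_eq_add (i := -1) (j := 0) (k := 1) (by omega) rfl rfl
  have h2 := hx.eq_of_eq_add (i := 0) (j := 1) (k := 2) (by omega) rfl rfl
  rw [hb1, ha1] at h1
  rw [hb2, ha2, h1] at h2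
  exact ⟨by linarith, by linarith⟩

theorem NesterenkoCoeffs.block (h : NesterenkoCoeffs a b) {n : ℕ} (hn : 1 ≤ n) :
    b (4 * n - 1) = 2 * (n : ℚ) + 1 ∧ a (4 * n - 1) = (n : ℚ) ^ 2 ∧
    b (4 * n) = 2 * (n : ℚ) ∧ a (4 * n) = ((n : ℚ) + 1) ^ 2 ∧
    b (4 * n + 1) = 2 * (n : ℚ) + 2 ∧ a (4 * n + 1) = (n : ℚ) * ((n : ℚ) + 1) ∧
    b (4 * n + 2) = 2 * (n : ℚ) + 4 ∧ a (4 * n + 2) = ((n : ℚ) + 1) * ((n : ℚ) + 2) := by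
  obtain ⟨hb3, ha3, hb4, ha4⟩ := h.2 ((n : ℤ) - 1) (by omega)
  rw [show 4 * ((n : ℤ) - 1) + 3 = 4 * n - 1 by ring] at hb3 ha3
  rw [show 4 * ((n : ℤ) - 1) + 4 = 4 * n by ring] at hb4 ha4
  push_cast at hb3 ha3 hb4 ha4
  exact ⟨by linarith, by linear_combination ha3, by linarith, by linear_combination ha4,
    h.1 n (by omega)⟩

theorem MatchesApery.succ (hab : NesterenkoCoeffs a b) (hx : ConvergentRec a b x)
    (hw : AperyRec w) {n : ℕ} (hn : 1 ≤ n) (h : MatchesApery x w n) :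
    MatchesApery x w (n + 1) := by
  obtain ⟨h3, h2⟩ := h
  obtain ⟨hbm, ham, hb0, ha0, hbp1, hap1, hbp2, hap2⟩ := hab.block hn
  have e1 := hx.eq_of_eq_add (i := 4 * n - 3) (j := 4 * n - 2) (k := 4 * n - 1)
    (by omega) (by ring) (by ring)
  have e2 := hx.eq_of_eq_add (i := 4 * n - 2) (j := 4 * n - 1) (k := 4 * n)
    (by omega) (by ring) (by ring)
  have e3 := hx.eq_of_eq_add (i := 4 * n - 1) (j := 4 * n) (k := 4 * n + 1)
    (by omega) (by ring) (by ring)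
  have e4 := hx.eq_of_eq_add (i := 4 * n) (j := 4 * n + 1) (k := 4 * n + 2)
    (by omega) (by ring) (by ring)
  have hrec := hw n hn
  have hfac : ((n + 1)! : ℚ) = ((n : ℚ) + 1) * n ! := by push_cast [factorial_succ]; ring
  rw [MatchesApery, Nat.add_sub_cancel, hfac,
    show 4 * ((n + 1 : ℕ) : ℤ) - 3 = 4 * n + 1 by push_cast; ring,
    show 4 * ((n + 1 : ℕ) : ℤ) - 2 = 4 * n + 2 by push_cast; ring,
    e4, e3, e2, e1, h3, h2, hbm, ham, hb0, ha0, hbp1, hap1, hbp2, hap2]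
  push_cast
  constructor
  · linear_combination (-5 * ((n : ℚ) + 1) * (n ! : ℚ) ^ 4 / 6) * hrec
  · linear_combination (-2 * ((n : ℚ) + 2) * ((n : ℚ) + 1) * (n ! : ℚ) ^ 4) * hrec

theorem MatchesApery.of_one (hab : NesterenkoCoeffs a b) (hx : ConvergentRec a b x)
    (hw : AperyRec w) (h1 : MatchesApery x w 1) {n : ℕ} (hn : 1 ≤ n) :
    MatchesApery x w n := by
  induction n, hn using Nat.le_induction with
  | base => exact h1
  | succ n hn ih => exact ih.succ hab hx hw hn

theorem stmt_8_general
    (ah bh Ph Qh : ℤ → ℚ)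
    (hah1 : ah 1 = 1) (hbh1 : bh 1 = 4) (hah2 : ah 2 = 4) (hbh2 : bh 2 = 4)
    (hh1 : ∀ k : ℤ, 1 ≤ k →
      bh (4 * k + 1) = 2 * (k : ℚ) + 2 ∧ ah (4 * k + 1) = (k : ℚ) * ((k : ℚ) + 1) ∧
      bh (4 * k + 2) = 2 * (k : ℚ) + 4 ∧ ah (4 * k + 2) = ((k : ℚ) + 1) * ((k : ℚ) + 2))
    (hh2 : ∀ k : ℤ, 0 ≤ k →
      bh (4 * k + 3) = 2 * (k : ℚ) + 3 ∧ ah (4 * k + 3) = ((k : ℚ) + 1) ^ 2 ∧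
      bh (4 * k + 4) = 2 * (k : ℚ) + 2 ∧ ah (4 * k + 4) = ((k : ℚ) + 2) ^ 2)
    (hPhm : Ph (-1) = 1) (hQhm : Qh (-1) = 0) (hPh0 : Ph 0 = 1) (hQh0 : Qh 0 = 1)
    (hPhrec : ∀ ν : ℤ, 0 ≤ ν → Ph (ν + 1) = bh (ν + 1) * Ph ν + ah (ν + 1) * Ph (ν - 1))
    (hQhrec : ∀ ν : ℤ, 0 ≤ ν → Qh (ν + 1) = bh (ν + 1) * Qh ν + ah (ν + 1) * Qh (ν - 1))
    -- the Apéry sequences u, v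
    (u v : ℕ → ℚ)
    (hu0 : u 0 = 1) (hu1 : u 1 = 5) (hv0 : v 0 = 0) (hv1 : v 1 = 6)
    (hurec : ∀ ν : ℕ, 1 ≤ ν →
      ((ν : ℚ) + 1) ^ 3 * u (ν + 1) -
        (34 * (ν : ℚ) ^ 3 + 51 * (ν : ℚ) ^ 2 + 27 * (ν : ℚ) + 5) * u ν +
        (ν : ℚ) ^ 3 * u (ν - 1) = 0)
    (hvrec : ∀ ν : ℕ, 1 ≤ ν →
      ((ν : ℚ) + 1) ^ 3 * v (ν + 1) -
        (34 * (ν : ℚ) ^ 3 + 51 * (ν : ℚ) ^ 2 + 27 * (ν : ℚ) + 5) * v ν +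
        (ν : ℚ) ^ 3 * v (ν - 1) = 0) :
    ∀ k : ℕ, 2 ≤ k →
      Ph (4 * (k : ℤ) - 2) = 2 * ((k : ℚ) + 1) * (Nat.factorial k : ℚ) ^ 4 * v k ∧
      Qh (4 * (k : ℤ) - 2) = 2 * ((k : ℚ) + 1) * (Nat.factorial k : ℚ) ^ 4 * u k := by
  intro k hk
  have hab : NesterenkoCoeffs ah bh := ⟨hh1, hh2⟩
  obtain ⟨hP1, hP2⟩ := ConvergentRec.one_two hPhrec hbh1 hah1 hbh2 hah2
  obtain ⟨hQ1, hQ2⟩ := ConvergentRec.one_two hQhrec hbh1 hah1 hbh2 hah2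
  have hP : MatchesApery Ph v k := MatchesApery.of_one hab hPhrec hvrec
    (by norm_num [MatchesApery, hP1, hP2, hPh0, hPhm, hv0, hv1]) (by omega)
  have hQ : MatchesApery Qh u k := MatchesApery.of_one hab hQhrec hurec
    (by norm_num [MatchesApery, hQ1, hQ2, hQh0, hQhm, hu0, hu1]) (by omega)
  exact ⟨hP.2, hQ.2⟩

/-- For every `k ≥ 2`, `P^∧_{4k−2} = 2(k+1)(k!)⁴ v_k` and `Q^∧_{4k−2} = 2(k+1)(k!)⁴ u_k`,
where `u, v` are the Apéry sequences and `P^∧, Q^∧` are the convergents of Nesterenko's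
continued fraction. -/
theorem stmt_8
    (ah bh Ph Qh : ℤ → ℚ)
    (hbh0 : bh 0 = 1) (hah1 : ah 1 = 1) (hbh1 : bh 1 = 4) (hah2 : ah 2 = 4) (hbh2 : bh 2 = 4)
    (hh1 : ∀ k : ℤ, 1 ≤ k →
      bh (4 * k + 1) = 2 * (k : ℚ) + 2 ∧ ah (4 * k + 1) = (k : ℚ) * ((k : ℚ) + 1) ∧
      bh (4 * k + 2) = 2 * (k : ℚ) + 4 ∧ ah (4 * k + 2) = ((k : ℚ) + 1) * ((k : ℚ) + 2))
    (hh2 : ∀ k : ℤ, 0 ≤ k →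
      bh (4 * k + 3) = 2 * (k : ℚ) + 3 ∧ ah (4 * k + 3) = ((k : ℚ) + 1) ^ 2 ∧
      bh (4 * k + 4) = 2 * (k : ℚ) + 2 ∧ ah (4 * k + 4) = ((k : ℚ) + 2) ^ 2)
    (hPhm : Ph (-1) = 1) (hQhm : Qh (-1) = 0) (hPh0 : Ph 0 = 1) (hQh0 : Qh 0 = 1)
    (hPhrec : ∀ ν : ℤ, 0 ≤ ν → Ph (ν + 1) = bh (ν + 1) * Ph ν + ah (ν + 1) * Ph (ν - 1))
    (hQhrec : ∀ ν : ℤ, 0 ≤ ν → Qh (ν + 1) = bh (ν + 1) * Qh ν + ah (ν + 1) * Qh (ν - 1))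
    -- the Apéry sequences u, v
    (u v : ℕ → ℚ)
    (hu0 : u 0 = 1) (hu1 : u 1 = 5) (hv0 : v 0 = 0) (hv1 : v 1 = 6)
    (hurec : ∀ ν : ℕ, 1 ≤ ν →
      ((ν : ℚ) + 1) ^ 3 * u (ν + 1) -
        (34 * (ν : ℚ) ^ 3 + 51 * (ν : ℚ) ^ 2 + 27 * (ν : ℚ) + 5) * u ν +
        (ν : ℚ) ^ 3 * u (ν - 1) = 0)
    (hvrec : ∀ ν : ℕ, 1 ≤ ν →
      ((ν : ℚ) + 1) ^ 3 * v (ν + 1) -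
        (34 * (ν : ℚ) ^ 3 + 51 * (ν : ℚ) ^ 2 + 27 * (ν : ℚ) + 5) * v ν +
        (ν : ℚ) ^ 3 * v (ν - 1) = 0) :
    ∀ k : ℕ, 2 ≤ k →
      Ph (4 * (k : ℤ) - 2) = 2 * ((k : ℚ) + 1) * (Nat.factorial k : ℚ) ^ 4 * v k ∧
      Qh (4 * (k : ℤ) - 2) = 2 * ((k : ℚ) + 1) * (Nat.factorial k : ℚ) ^ 4 * u k :=
  stmt_8_general ah bh Ph Qh hah1 hbh1 hah2 hbh2 hh1 hh2 hPhm hQhm hPh0 hQh0 hPhrec hQhrec u v hu0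
    hu1 hv0 hv1 hurec hvrec
end

section
/- For every integer k ≥ 2: ∏_{κ=1}^{4k−2} a^∧_κ = 2(k!)⁸(k+1)/k³, ∏_{κ=1}^{4k−1} a^∧_κ = 2(k!)⁸(k+1)/k, ∏_{κ=1}^{4k} a^∧_κ = 2(k!)⁸(k+1)³/k, and ∏_{κ=1}^{4k+1} a^∧_κ = 2(k!)⁸(k+1)⁴. -/
/-!
The product up to `4k + 1` satisfies a four-step recursion: passing from `4k + 1` to `4k + 5`
multiplies it by `(k+1)(k+2) · (k+1)² · (k+2)² · (k+1)(k+2) = (k+1)⁴ (k+2)⁴`, which is exactly the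
ratio of `2((k+1)!)⁸(k+2)⁴` to `2(k!)⁸(k+1)⁴`. The other three products are then obtained from it
by dividing out `a(4k+1) = k(k+1)`, `a(4k) = (k+1)²` and `a(4k-1) = k²` in turn.
-/

open Finset

theorem Finset.prod_Icc_one_eq_prod_pred_mul {M : Type*} [CommMonoid M] (f : ℕ → M) {n : ℕ}
    (hn : 1 ≤ n) : ∏ i ∈ Icc 1 n, f i = (∏ i ∈ Icc 1 (n - 1), f i) * f n := by
  obtain ⟨m, rfl⟩ := Nat.exists_eq_add_of_le' hn
  exact prod_Icc_succ_top (by omega) f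

theorem Finset.prod_Icc_one_add_four {M : Type*} [CommMonoid M] (f : ℕ → M) (n : ℕ) :
    ∏ i ∈ Icc 1 (n + 4), f i =
      (∏ i ∈ Icc 1 n, f i) * (f (n + 1) * f (n + 2) * f (n + 3) * f (n + 4)) := by
  rw [prod_Icc_succ_top (by omega), prod_Icc_succ_top (by omega), prod_Icc_succ_top (by omega),
    prod_Icc_succ_top (by omega)]
  simp only [mul_assoc]

section Coefficients

variable {a : ℕ → ℚ}
  (h1 : ∀ k : ℕ, 1 ≤ k →
    a (4 * k + 1) = (k : ℚ) * ((k : ℚ) + 1) ∧ a (4 * k + 2) = ((k : ℚ) + 1) * ((k : ℚ) + 2))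
  (h2 : ∀ k : ℕ, a (4 * k + 3) = ((k : ℚ) + 1) ^ 2 ∧ a (4 * k + 4) = ((k : ℚ) + 2) ^ 2)
include h2

theorem coeff_four_mul_and_pred {k : ℕ} (hk : 1 ≤ k) :
    a (4 * k) = ((k : ℚ) + 1) ^ 2 ∧ a (4 * k - 1) = (k : ℚ) ^ 2 := by
  obtain ⟨m, rfl⟩ := Nat.exists_eq_add_of_le' hk
  obtain ⟨h3, h4⟩ := h2 m
  rw [show 4 * (m + 1) - 1 = 4 * m + 3 by omega, show 4 * (m + 1) = 4 * m + 4 by ring, h3, h4]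
  push_cast
  constructor <;> ring

include h1

theorem prod_Icc_one_four_mul_add_one (ha1 : a 1 = 1) (ha2 : a 2 = 4) {k : ℕ} (hk : 1 ≤ k) :
    ∏ i ∈ Icc 1 (4 * k + 1), a i = 2 * (k.factorial : ℚ) ^ 8 * ((k : ℚ) + 1) ^ 4 := by
  induction k, hk using Nat.le_induction with
  | base =>
    rw [prod_Icc_one_add_four, Icc_self, prod_singleton, ha1, ha2, (h2 0).1, (h2 0).2,
      (h1 1 le_rfl).1]
    norm_num
  | succ k hk ih =>
    obtain ⟨-, h42⟩ := h1 k hk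
    obtain ⟨h43, h44⟩ := h2 k
    obtain ⟨h45, -⟩ := h1 (k + 1) (by omega)
    rw [show 4 * (k + 1) + 1 = 4 * k + 1 + 4 by ring, prod_Icc_one_add_four, ih,
      show 4 * k + 1 + 1 = 4 * k + 2 by ring, show 4 * k + 1 + 2 = 4 * k + 3 by ring,
      show 4 * k + 1 + 3 = 4 * k + 4 by ring, show 4 * k + 1 + 4 = 4 * (k + 1) + 1 by ring,
      h42, h43, h44, h45, Nat.factorial_succ]
    push_cast
    ring

end Coefficients

/-- For every `k ≥ 2`, the partial products of Nesterenko's coefficients `a^∧` satisfy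
`∏_{κ=1}^{4k−2} a^∧_κ = 2(k!)⁸(k+1)/k³`, `∏_{κ=1}^{4k−1} a^∧_κ = 2(k!)⁸(k+1)/k`,
`∏_{κ=1}^{4k} a^∧_κ = 2(k!)⁸(k+1)³/k`, and `∏_{κ=1}^{4k+1} a^∧_κ = 2(k!)⁸(k+1)⁴`. -/
theorem stmt_9 (a : ℕ → ℚ)
    (ha1 : a 1 = 1) (ha2 : a 2 = 4)
    (h1 : ∀ k : ℕ, 1 ≤ k →
      a (4 * k + 1) = (k : ℚ) * ((k : ℚ) + 1) ∧
      a (4 * k + 2) = ((k : ℚ) + 1) * ((k : ℚ) + 2))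
    (h2 : ∀ k : ℕ,
      a (4 * k + 3) = ((k : ℚ) + 1) ^ 2 ∧ a (4 * k + 4) = ((k : ℚ) + 2) ^ 2) :
    ∀ k : ℕ, 2 ≤ k →
      (∏ κ ∈ Finset.Icc 1 (4 * k - 2), a κ) =
        2 * (Nat.factorial k : ℚ) ^ 8 * ((k : ℚ) + 1) / (k : ℚ) ^ 3 ∧
      (∏ κ ∈ Finset.Icc 1 (4 * k - 1), a κ) =
        2 * (Nat.factorial k : ℚ) ^ 8 * ((k : ℚ) + 1) / (k : ℚ) ∧
      (∏ κ ∈ Finset.Icc 1 (4 * k), a κ) =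
        2 * (Nat.factorial k : ℚ) ^ 8 * ((k : ℚ) + 1) ^ 3 / (k : ℚ) ∧
      (∏ κ ∈ Finset.Icc 1 (4 * k + 1), a κ) =
        2 * (Nat.factorial k : ℚ) ^ 8 * ((k : ℚ) + 1) ^ 4 := by
  intro k hk
  have hk1 : 1 ≤ k := by omega
  have hk0 : (k : ℚ) ≠ 0 := by positivity
  obtain ⟨a_4k, a_4k_sub_1⟩ := coeff_four_mul_and_pred h2 hk1
  have top := prod_Icc_one_four_mul_add_one h1 h2 ha1 ha2 hk1
  have split_4k_add_1 := prod_Icc_succ_top (show 1 ≤ 4 * k + 1 by omega) a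
  have split_4k := prod_Icc_one_eq_prod_pred_mul a (show 1 ≤ 4 * k by omega)
  have split_4k_sub_1 := prod_Icc_one_eq_prod_pred_mul a (show 1 ≤ 4 * k - 1 by omega)
  rw [(h1 k hk1).1, top] at split_4k_add_1
  rw [a_4k] at split_4k
  rw [a_4k_sub_1, show 4 * k - 1 - 1 = 4 * k - 2 by omega] at split_4k_sub_1
  have e4 := eq_div_of_mul_eq (by positivity) split_4k_add_1.symm
  have e3 := eq_div_of_mul_eq (by positivity) split_4k.symm
  have e2 := eq_div_of_mul_eq (by positivity) split_4k_sub_1.symm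
  rw [e4] at e3
  rw [e3] at e2
  refine ⟨?_, ?_, ?_, top⟩
  · rw [e2]; field_simp
  · rw [e3]; field_simp
  · rw [e4]; field_simp
end

section
/- Let α ≥ 1 and ν ≥ 0 be integers and let 0 ≤ k ≤ ν+α. Then ((ν+α)!/ν!)² · lim_{t→−k} ((t+k)·R(α,t,ν))² = C(ν+α, k)² · C(ν+k, k)², i.e., the coefficient of (t+k)^{−2} in the partial fraction decomposition of ((ν+α)!/ν!)² R(α,t,ν)² equals C(ν+α, k)² C(ν+k, k)². -/
/-!
Cancelling the factor `t + k` of the denominator of `R(α,t,ν)` leaves a rational function that is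
continuous at `t = -k`. Its value there is a quotient of factorial products: the numerator
`∏_{j=1}^{ν} (-k-j)` is `(-1)^ν (k+ν)!/k!`, and the remaining denominator
`∏_{j≠k} (j-k)` is `(-1)^k k! (ν+α-k)!`. Squaring removes the signs, and the factorials
regroup into `C(ν+α,k) C(ν+k,k)`.
-/

/-- The rational function `R(α,t,ν) = (∏_{j=1}^{ν}(t−j)) / (∏_{j=0}^{ν+α}(t+j))`. -/
noncomputable def R (α : ℕ) (t : ℝ) (ν : ℕ) : ℝ :=
  (∏ j ∈ Finset.Icc 1 ν, (t - (j : ℝ))) / (∏ j ∈ Finset.Icc 0 (ν + α), (t + (j : ℝ)))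

open Finset Filter Topology Nat

lemma prod_Icc_zero_eq_mul_mul {M : Type*} [CommMonoid M] (f : ℕ → M) {k n : ℕ} (hk : k ≤ n) :
    ∏ j ∈ Icc 0 n, f j = (∏ j ∈ range k, f j) * f k * ∏ i ∈ range (n - k), f (k + 1 + i) := by
  rw [← range_succ_eq_Icc_zero, show n + 1 = k + 1 + (n - k) by omega, prod_range_add,
    prod_range_succ]

lemma factorial_mul_prod_Icc_add (a b : ℕ) :
    (a ! : ℝ) * ∏ j ∈ Icc 1 b, ((a : ℝ) + j) = (a + b)! := by
  induction b with
  | zero => simp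
  | succ b ih =>
    rw [prod_Icc_succ_top (by omega), ← mul_assoc, ih, ← add_assoc, factorial_succ]
    push_cast
    ring

lemma prod_Icc_neg_sub (a b : ℕ) :
    ∏ j ∈ Icc 1 b, (-(a : ℝ) - j) = (-1) ^ b * ((a + b)! / a !) := by
  have ha : (a ! : ℝ) ≠ 0 := by positivity
  simp_rw [show ∀ j : ℕ, -(a : ℝ) - j = -((a : ℝ) + j) from fun j => by ring]
  rw [prod_neg, Nat.card_Icc, add_tsub_cancel_right, ← factorial_mul_prod_Icc_add,
    mul_div_cancel_left₀ _ ha]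

lemma prod_range_neg_add (k : ℕ) : ∏ j ∈ range k, (-(k : ℝ) + j) = (-1) ^ k * k ! := by
  rw [← prod_range_reflect]
  calc ∏ j ∈ range k, (-(k : ℝ) + ↑(k - 1 - j)) = ∏ j ∈ range k, -((j : ℝ) + 1) := by
        refine prod_congr rfl fun j hj => ?_
        rw [Nat.sub_sub, Nat.cast_sub (by simp at hj; omega)]
        push_cast
        ring
    _ = (-1) ^ k * k ! := by
        rw [prod_neg, card_range, ← prod_range_add_one_eq_factorial]
        push_cast
        rfl

lemma mul_R_eq_div {α ν k : ℕ} (hk : k ≤ ν + α) {t : ℝ} (ht : t ≠ -k) :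
    (t + k) * R α t ν = (∏ j ∈ Icc 1 ν, (t - j)) /
      ((∏ j ∈ range k, (t + j)) * ∏ i ∈ range (ν + α - k), (t + ↑(k + 1 + i))) := by
  have htk : t + k ≠ 0 := fun h => ht (by linarith)
  rw [R, prod_Icc_zero_eq_mul_mul _ hk, mul_right_comm, mul_comm _ (t + k), mul_div_assoc',
    mul_div_mul_left _ _ htk]

lemma tendsto_mul_R (α ν k : ℕ) (hk : k ≤ ν + α) :
    Tendsto (fun t : ℝ => (t + k) * R α t ν) (𝓝[≠] (-k : ℝ))
      (𝓝 ((-1) ^ ν * ((k + ν)! / k !) / ((-1) ^ k * k ! * (ν + α - k)!))) := by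
  have hA := prod_range_neg_add k
  have hB : ∏ i ∈ range (ν + α - k), (-(k : ℝ) + ↑(k + 1 + i)) = (ν + α - k)! := by
    rw [← prod_range_add_one_eq_factorial]
    push_cast
    exact prod_congr rfl fun i _ => by ring
  have hN := prod_Icc_neg_sub k ν
  have hcont : ContinuousAt (fun t : ℝ => (∏ j ∈ Icc 1 ν, (t - j)) /
      ((∏ j ∈ range k, (t + j)) * ∏ i ∈ range (ν + α - k), (t + ↑(k + 1 + i)))) (-k) := by
    refine ContinuousAt.div (by fun_prop) (by fun_prop) ?_
    rw [hA, hB]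
    positivity
  have hlim := hcont.tendsto
  simp only [hA, hB, hN] at hlim
  refine (tendsto_nhdsWithin_of_tendsto_nhds hlim).congr' ?_
  filter_upwards [self_mem_nhdsWithin] with t ht
  exact (mul_R_eq_div hk ht).symm

theorem stmt_12_general (α ν k : ℕ) (hk : k ≤ ν + α) :
    Filter.Tendsto
      (fun t : ℝ =>
        ((Nat.factorial (ν + α) : ℝ) / (Nat.factorial ν : ℝ)) ^ 2 *
          ((t + (k : ℝ)) * R α t ν) ^ 2)
      (nhdsWithin (-(k : ℝ)) {(-(k : ℝ))}ᶜ)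
      (nhds ((Nat.choose (ν + α) k : ℝ) ^ 2 * (Nat.choose (ν + k) k : ℝ) ^ 2)) := by
  convert ((tendsto_mul_R α ν k hk).pow 2).const_mul ((((ν + α)! : ℝ) / ν !) ^ 2) using 2
  rw [cast_choose ℝ hk, cast_choose ℝ (le_add_left k ν), add_tsub_cancel_right, add_comm ν k]
  field_simp
  simp only [← pow_mul, pow_mul', neg_one_sq, one_pow]

/-- For integers `α ≥ 1`, `ν ≥ 0` and `0 ≤ k ≤ ν+α`, the coefficient of `(t+k)⁻²` in the
partial fraction expansion of `((ν+α)!/ν!)² R(α,t,ν)²`, i.e., the limit as `t → −k` of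
`((ν+α)!/ν!)² ((t+k) R(α,t,ν))²`, equals `C(ν+α,k)² C(ν+k,k)²`. -/
theorem stmt_12 (α ν k : ℕ) (hα : 1 ≤ α) (hk : k ≤ ν + α) :
    Filter.Tendsto
      (fun t : ℝ =>
        ((Nat.factorial (ν + α) : ℝ) / (Nat.factorial ν : ℝ)) ^ 2 *
          ((t + (k : ℝ)) * R α t ν) ^ 2)
      (nhdsWithin (-(k : ℝ)) {(-(k : ℝ))}ᶜ)
      (nhds ((Nat.choose (ν + α) k : ℝ) ^ 2 * (Nat.choose (ν + k) k : ℝ) ^ 2)) :=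
  stmt_12_general α ν k hk
end

section
/- Let α ≥ 1 and ν ≥ 0 be integers and let 0 ≤ k ≤ ν+α. Then ((ν+α)!/ν!)² · lim_{t→−k} (d/dt)((t+k)·R(α,t,ν))² = 2 · C(ν+α, k)² · C(ν+k, k)² · S_{1,k}(α,ν), i.e., the coefficient of (t+k)^{−1} in the partial fraction decomposition of ((ν+α)!/ν!)² R(α,t,ν)² equals 2 C(ν+α, k)² C(ν+k, k)² S_{1,k}(α,ν). -/
/-- `S_{1,k}(α,ν) = −∑_{κ=k+1}^{ν+k} 1/κ − ∑_{κ=1}^{ν+α−k} 1/κ + ∑_{κ=1}^{k} 1/κ`. -/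
noncomputable def S1 (α ν k : ℕ) : ℝ :=
  -(∑ κ ∈ Finset.Icc (k + 1) (ν + k), 1 / (κ : ℝ)) -
    (∑ κ ∈ Finset.Icc 1 (ν + α - k), 1 / (κ : ℝ)) +
    ∑ κ ∈ Finset.Icc 1 k, 1 / (κ : ℝ)

open Finset Filter Topology
open scoped Nat

@[to_additive]
theorem prod_Icc_add_left {M : Type*} [CommMonoid M] (f : ℕ → M) (a b m : ℕ) :
    ∏ i ∈ Icc a b, f (m + i) = ∏ j ∈ Icc (m + a) (m + b), f j := by
  rw [← map_add_left_Icc, prod_map]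
  rfl

@[to_additive]
theorem prod_erase_Icc_zero {M : Type*} [CommMonoid M] (f : ℕ → M) {k n : ℕ} (hk : k ≤ n) :
    ∏ j ∈ (Icc 0 n).erase k, f j = (∏ i ∈ Icc 1 k, f (k - i)) * ∏ i ∈ Icc 1 (n - k), f (k + i) := by
  have hsplit : (Icc 0 n).erase k = range k ∪ Icc (k + 1) n := by
    ext j; simp only [mem_erase, mem_Icc, mem_union, mem_range]; omega
  have hdisj : Disjoint (range k) (Icc (k + 1) n) := by
    rw [disjoint_left]; intro j; simp only [mem_range, mem_Icc]; omega
  rw [hsplit, prod_union hdisj, prod_Icc_add_left, Nat.add_sub_cancel' hk]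
  congr 1
  refine prod_nbij' (k - ·) (k - ·) ?_ ?_ ?_ ?_ ?_ <;> intro i hi <;>
    simp only [mem_range, mem_Icc] at hi ⊢
  all_goals first | omega | rw [Nat.sub_sub_self hi.le]

theorem prod_Icc_one_add_eq_ascFactorial (m n : ℕ) :
    ∏ j ∈ Icc 1 n, (m + j) = (m + 1).ascFactorial n := by
  rw [Nat.ascFactorial_eq_prod_range, ← Ico_add_one_right_eq_Icc, prod_Ico_eq_prod_range,
    Nat.add_sub_cancel]
  simp only [add_assoc, add_comm 1]

theorem prod_Icc_one_eq_factorial (n : ℕ) : ∏ j ∈ Icc 1 n, j = n ! := by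
  simpa [Nat.one_ascFactorial] using prod_Icc_one_add_eq_ascFactorial 0 n

section
variable {K : Type*}

theorem prod_Icc_neg_natCast_sub [CommRing K] (k ν : ℕ) :
    ∏ j ∈ Icc 1 ν, (-(k : K) - j) = (-1) ^ ν * ν ! * (ν + k).choose k := by
  have hterm : ∀ j ∈ Icc 1 ν, -(k : K) - j = -((k + j : ℕ) : K) := by
    intro j _; push_cast; ring
  rw [prod_congr rfl hterm, prod_neg, Nat.card_Icc, Nat.add_sub_cancel, ← Nat.cast_prod,
    prod_Icc_one_add_eq_ascFactorial, Nat.ascFactorial_eq_factorial_mul_choose, add_comm k,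
    ← Nat.choose_symm_add]
  push_cast; ring

theorem prod_erase_Icc_neg_natCast_add [CommRing K] {k n : ℕ} (hk : k ≤ n) :
    ∏ j ∈ (Icc 0 n).erase k, (-(k : K) + j) = (-1) ^ k * k ! * (n - k)! := by
  have hleft : ∀ i ∈ Icc 1 k, -(k : K) + ((k - i : ℕ) : K) = -(i : K) := by
    intro i hi; push_cast [Nat.cast_sub (mem_Icc.1 hi).2]; ring
  rw [prod_erase_Icc_zero _ hk, prod_congr rfl hleft, prod_neg, Nat.card_Icc, Nat.add_sub_cancel]
  simp only [Nat.cast_add, neg_add_cancel_left]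
  rw [← Nat.cast_prod, ← Nat.cast_prod, prod_Icc_one_eq_factorial, prod_Icc_one_eq_factorial,
    mul_assoc]

theorem sum_Icc_inv_neg_natCast_sub [Field K] (k ν : ℕ) :
    ∑ j ∈ Icc 1 ν, (-(k : K) - j)⁻¹ = -∑ κ ∈ Icc (k + 1) (ν + k), 1 / (κ : K) := by
  rw [add_comm ν, ← sum_Icc_add_left, ← sum_neg_distrib]
  refine sum_congr rfl fun j _ => ?_
  rw [← neg_add', inv_neg, one_div, Nat.cast_add]

theorem sum_erase_Icc_inv_neg_natCast_add [Field K] {k n : ℕ} (hk : k ≤ n) :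
    ∑ j ∈ (Icc 0 n).erase k, (-(k : K) + j)⁻¹ =
      -∑ κ ∈ Icc 1 k, 1 / (κ : K) + ∑ κ ∈ Icc 1 (n - k), 1 / (κ : K) := by
  rw [sum_erase_Icc_zero _ hk, ← sum_neg_distrib]
  congr 1 <;> refine sum_congr rfl fun i hi => ?_
  · have : -(k : K) + ((k - i : ℕ) : K) = -i := by push_cast [Nat.cast_sub (mem_Icc.1 hi).2]; ring
    rw [this, inv_neg, one_div]
  · push_cast
    rw [neg_add_cancel_left, one_div]

end

theorem tendsto_deriv_nhdsNE_of_eventuallyEq {𝕜 F : Type*} [NontriviallyNormedField 𝕜]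
    [NormedAddCommGroup F] [NormedSpace 𝕜 F] [CompleteSpace F] {f g : 𝕜 → F} {a : 𝕜}
    (hfg : f =ᶠ[𝓝[≠] a] g) (hg : AnalyticAt 𝕜 g a) :
    Tendsto (deriv f) (𝓝[≠] a) (𝓝 (deriv g a)) := by
  have hloc : ∀ᶠ t in 𝓝[≠] a, f =ᶠ[𝓝 t] g := by
    filter_upwards [eventually_eventually_nhdsWithin.2 hfg, self_mem_nhdsWithin] with t ht hta
    rwa [isOpen_compl_singleton.nhdsWithin_eq hta] at ht
  exact (hg.deriv.continuousAt.tendsto.mono_left nhdsWithin_le_nhds).congr'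
    (hloc.mono fun t ht => ht.deriv_eq.symm)

theorem deriv_div_sq {𝕜 : Type*} [NontriviallyNormedField 𝕜] {f g : 𝕜 → 𝕜} {x : 𝕜}
    (hf : DifferentiableAt 𝕜 f x) (hg : DifferentiableAt 𝕜 g x) (hfx : f x ≠ 0) (hgx : g x ≠ 0) :
    deriv (fun t => (f t / g t) ^ 2) x = 2 * (f x / g x) ^ 2 * (logDeriv f x - logDeriv g x) := by
  have hx : (f x / g x) ^ 2 ≠ 0 := by positivity
  rw [← div_mul_cancel₀ (deriv _ x) hx, ← logDeriv_apply,
    logDeriv_fun_pow (f := fun t => f t / g t) (hf.div hg hgx), logDeriv_div x hfx hgx hf hg]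
  push_cast; ring

theorem logDeriv_prod_add {𝕜 ι : Type*} [NontriviallyNormedField 𝕜] (s : Finset ι) (c : ι → 𝕜)
    {x : 𝕜} (hx : ∀ i ∈ s, x + c i ≠ 0) :
    logDeriv (fun t => ∏ i ∈ s, (t + c i)) x = ∑ i ∈ s, (x + c i)⁻¹ := by
  rw [logDeriv_prod hx (fun _ _ => by fun_prop)]
  simp [logDeriv_apply]

theorem add_mul_R_eq {α ν k : ℕ} (hk : k ≤ ν + α) {t : ℝ} (ht : t + k ≠ 0) :
    (t + k) * R α t ν = (∏ j ∈ Icc 1 ν, (t - j)) / ∏ j ∈ (Icc 0 (ν + α)).erase k, (t + j) := by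
  rw [R, ← mul_prod_erase _ (fun j : ℕ => t + j) (mem_Icc.2 ⟨Nat.zero_le k, hk⟩),
    mul_div_assoc', mul_div_mul_left _ _ ht]

theorem stmt_13_general (α ν k : ℕ) (hk : k ≤ ν + α) :
    Filter.Tendsto
      (fun t : ℝ =>
        ((Nat.factorial (ν + α) : ℝ) / (Nat.factorial ν : ℝ)) ^ 2 *
          deriv (fun s : ℝ => ((s + (k : ℝ)) * R α s ν) ^ 2) t)
      (nhdsWithin (-(k : ℝ)) {(-(k : ℝ))}ᶜ)
      (nhds (2 * (Nat.choose (ν + α) k : ℝ) ^ 2 * (Nat.choose (ν + k) k : ℝ) ^ 2 *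
        S1 α ν k)) := by
  set P : ℝ → ℝ := fun t => ∏ j ∈ Icc 1 ν, (t - j)
  set Q : ℝ → ℝ := fun t => ∏ j ∈ (Icc 0 (ν + α)).erase k, (t + j)
  have hP : P (-k) = (-1) ^ ν * ν ! * (ν + k).choose k := prod_Icc_neg_natCast_sub k ν
  have hQ : Q (-k) = (-1) ^ k * k ! * (ν + α - k)! := prod_erase_Icc_neg_natCast_add hk
  have hP0 : P (-k) ≠ 0 := by simp [hP, Nat.factorial_ne_zero, Nat.choose_eq_zero_iff]
  have hQ0 : Q (-k) ≠ 0 := by rw [hQ]; positivity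
  have hLP : logDeriv P (-k) = -∑ κ ∈ Icc (k + 1) (ν + k), 1 / (κ : ℝ) := by
    simp only [P, sub_eq_add_neg]
    rw [logDeriv_prod_add _ _ fun j hj => by
      simpa [sub_eq_add_neg] using prod_ne_zero_iff.1 hP0 j hj]
    simpa [sub_eq_add_neg] using sum_Icc_inv_neg_natCast_sub (K := ℝ) k ν
  have hLQ : logDeriv Q (-k) =
      -∑ κ ∈ Icc 1 k, 1 / (κ : ℝ) + ∑ κ ∈ Icc 1 (ν + α - k), 1 / (κ : ℝ) := by
    rw [logDeriv_prod_add _ _ (prod_ne_zero_iff.1 hQ0), sum_erase_Icc_inv_neg_natCast_add hk]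
  have hfg : (fun s : ℝ => ((s + k) * R α s ν) ^ 2) =ᶠ[𝓝[≠] (-k : ℝ)] fun s => (P s / Q s) ^ 2 :=
    eventually_nhdsWithin_of_forall fun s hs => by
      dsimp only
      rw [add_mul_R_eq hk (fun h => hs (eq_neg_of_add_eq_zero_left h))]
  have hderiv : deriv (fun s => (P s / Q s) ^ 2) (-k) = 2 * (P (-k) / Q (-k)) ^ 2 *
      (logDeriv P (-k) - logDeriv Q (-k)) := deriv_div_sq (by fun_prop) (by fun_prop) hP0 hQ0
  convert (tendsto_deriv_nhdsNE_of_eventuallyEq hfg (by fun_prop (disch := exact hQ0))).const_mul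
    ((((ν + α)! : ℝ) / ν !) ^ 2) using 2
  rw [hderiv, hP, hQ, hLP, hLQ, S1, Nat.cast_choose ℝ hk]
  have hsign (n : ℕ) : ((-1 : ℝ) ^ n) ^ 2 = 1 := by rw [← pow_mul, pow_mul', neg_one_sq, one_pow]
  field_simp
  rw [hsign, hsign]
  ring

/-- For integers `α ≥ 1`, `ν ≥ 0` and `0 ≤ k ≤ ν+α`, the coefficient of `(t+k)⁻¹` in the
partial fraction expansion of `((ν+α)!/ν!)² R(α,t,ν)²`, i.e., the limit as `t → −k` of
`((ν+α)!/ν!)² (d/dt)((t+k) R(α,t,ν))²`, equals `2 C(ν+α,k)² C(ν+k,k)² S_{1,k}(α,ν)`. -/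
theorem stmt_13 (α ν k : ℕ) (hα : 1 ≤ α) (hk : k ≤ ν + α) :
    Filter.Tendsto
      (fun t : ℝ =>
        ((Nat.factorial (ν + α) : ℝ) / (Nat.factorial ν : ℝ)) ^ 2 *
          deriv (fun s : ℝ => ((s + (k : ℝ)) * R α s ν) ^ 2) t)
      (nhdsWithin (-(k : ℝ)) {(-(k : ℝ))}ᶜ)
      (nhds (2 * (Nat.choose (ν + α) k : ℝ) ^ 2 * (Nat.choose (ν + k) k : ℝ) ^ 2 *
        S1 α ν k)) :=
  stmt_13_general α ν k hk
end

section
/- Let α ≥ 1 and ν ≥ 0 be integers and r ∈ {0, 1, 2}. Then ∑_{k=0}^{ν+α} ( 2 k^r · C(ν+α, k)² C(ν+k, k)² · S_{1,k}(α,ν) − r k^{r−1} · C(ν+α, k)² C(ν+k, k)² ) = 0, where the term r k^{r−1} is interpreted as 0 when r = 0. -/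
/-!
Put `n = ν + α`, `N = X (X - 1) ⋯ (X - n)` and `P = X ^ r (X + 1)² ⋯ (X + ν)²`. Up to the factor
`-(n! / ν!)²`, the `k`-th summand is the residue of `P / N²` at `k`, and these residues sum to zero
because `deg P ≤ 2n = deg N² - 2`. Residues are replaced by Hermite interpolation: `P` agrees to
first order at every node with `∑ₖ (aₖ + bₖ (X - k)) (N / (X - k))²`, the difference is divisible
by `N²` but has degree `< 2n + 2`, so it vanishes; the coefficient of `X ^ (2n + 1)` gives
`∑ₖ bₖ = 0`, and `bₖ` is the residue.
-/

open Polynomial Finset Lagrange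

theorem Polynomial.sq_X_sub_C_dvd_iff {R : Type*} [CommRing R] {p : R[X]} {a : R} :
    (X - C a) ^ 2 ∣ p ↔ p.IsRoot a ∧ (derivative p).IsRoot a := by
  rcases eq_or_ne p 0 with rfl | hp
  · simp
  rw [← le_rootMultiplicity_iff hp, ← one_lt_rootMultiplicity_iff_isRoot hp]
  rfl

namespace Lagrange

variable {F ι : Type*} [Field F] [DecidableEq ι] {s t : Finset ι} {v : ι → F}

theorem eval_derivative_nodal_eq_mul_sum {x : F} (hx : ∀ j ∈ t, x ≠ v j) :
    (derivative (nodal t v)).eval x = (nodal t v).eval x * ∑ j ∈ t, (x - v j)⁻¹ := by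
  rw [derivative_nodal, eval_finsetSum, mul_sum]
  refine sum_congr rfl fun j hj => ?_
  rw [eval_nodal, eval_nodal, ← mul_prod_erase t (fun i => x - v i) hj, mul_comm, ← mul_assoc,
    inv_mul_cancel₀ (sub_ne_zero.2 (hx j hj)), one_mul]

/-- The residue of `P / nodal s v ^ 2` at the node `v i`. -/
noncomputable def sqNodalResidue (s : Finset ι) (v : ι → F) (P : F[X]) (i : ι) : F :=
  nodalWeight s v i ^ 2 *
    ((derivative P).eval (v i) - 2 * P.eval (v i) * ∑ j ∈ s.erase i, (v i - v j)⁻¹)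

noncomputable def hermiteInterpolate (s : Finset ι) (v : ι → F) (P : F[X]) : F[X] :=
  ∑ i ∈ s,
    (C (nodalWeight s v i ^ 2 * P.eval (v i)) + C (sqNodalResidue s v P i) * (X - C (v i))) *
      nodal (s.erase i) v ^ 2

theorem sq_X_sub_C_dvd_sub_hermiteInterpolate (hvs : Set.InjOn v s) (P : F[X]) {k : ι}
    (hk : k ∈ s) : (X - C (v k)) ^ 2 ∣ P - hermiteInterpolate s v P := by
  have hrest : (X - C (v k)) ^ 2 ∣ ∑ i ∈ s.erase k,
      (C (nodalWeight s v i ^ 2 * P.eval (v i)) + C (sqNodalResidue s v P i) * (X - C (v i))) *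
        nodal (s.erase i) v ^ 2 :=
    dvd_sum fun i hi => dvd_mul_of_dvd_right (pow_dvd_pow_of_dvd
      (X_sub_C_dvd_nodal v (mem_erase.2 ⟨(ne_of_mem_erase hi).symm, hk⟩)) 2) _
  rw [hermiteInterpolate, ← add_sum_erase _ _ hk, ← sub_sub]
  refine dvd_sub ?_ hrest
  have hd : (nodal (s.erase k) v).eval (v k) ≠ 0 := by
    simpa [nodalWeight_eq_eval_nodal_erase_inv] using nodalWeight_ne_zero hvs hk
  have hD' : (derivative (nodal (s.erase k) v)).eval (v k) =
      (nodal (s.erase k) v).eval (v k) * ∑ j ∈ s.erase k, (v k - v j)⁻¹ :=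
    eval_derivative_nodal_eq_mul_sum fun j hj h =>
      ne_of_mem_erase hj (hvs (mem_of_mem_erase hj) hk h.symm)
  rw [sq_X_sub_C_dvd_iff, IsRoot, IsRoot, derivative_sub, derivative_mul, derivative_pow]
  simp only [eval_sub, eval_add, eval_mul, eval_C, eval_pow, eval_X, derivative_add,
    derivative_C, derivative_mul, derivative_sub, derivative_X, eval_zero, eval_one, hD',
    sqNodalResidue, nodalWeight_eq_eval_nodal_erase_inv]
  constructor <;> field_simp <;> ring

theorem natDegree_hermiteInterpolate_le (P : F[X]) :
    (hermiteInterpolate s v P).natDegree ≤ 2 * #s - 1 := by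
  refine natDegree_sum_le_of_forall_le _ _ fun i hi => (natDegree_mul_le).trans ?_
  have hlin : (C (nodalWeight s v i ^ 2 * P.eval (v i)) +
      C (sqNodalResidue s v P i) * (X - C (v i))).natDegree ≤ 1 := by
    compute_degree
  have hcard := card_erase_add_one hi
  rw [natDegree_pow, natDegree_nodal]
  omega

theorem coeff_hermiteInterpolate (P : F[X]) :
    (hermiteInterpolate s v P).coeff (2 * #s - 1) = ∑ i ∈ s, sqNodalResidue s v P i := by
  rw [hermiteInterpolate, finsetSum_coeff]
  refine sum_congr rfl fun i hi => ?_
  have hcard := card_erase_add_one hi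
  have hmonic : ((X - C (v i)) * nodal (s.erase i) v ^ 2).Monic :=
    (monic_X_sub_C _).mul (nodal_monic.pow 2)
  have hdeg : ((X - C (v i)) * nodal (s.erase i) v ^ 2).natDegree = 2 * #s - 1 := by
    rw [(monic_X_sub_C _).natDegree_mul (nodal_monic.pow 2), natDegree_X_sub_C, natDegree_pow,
      natDegree_nodal]
    omega
  rw [add_mul, mul_assoc, coeff_add, coeff_C_mul, coeff_C_mul, ← hdeg, hmonic.coeff_natDegree,
    coeff_eq_zero_of_natDegree_lt (by rw [natDegree_pow, natDegree_nodal]; omega)]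
  ring

theorem eq_hermiteInterpolate (hvs : Set.InjOn v s) {P : F[X]} (hP : P.natDegree < 2 * #s) :
    P = hermiteInterpolate s v P := by
  have hdvd : nodal s v ^ 2 ∣ P - hermiteInterpolate s v P := by
    rw [nodal_eq, ← prod_pow]
    refine prod_dvd_of_coprime (fun i hi j hj hij => ?_) fun k hk =>
      sq_X_sub_C_dvd_sub_hermiteInterpolate hvs P hk
    exact (isCoprime_X_sub_C_of_isUnit_sub
      (sub_ne_zero.2 fun h => hij (hvs hi hj h)).isUnit).pow
  refine sub_eq_zero.1 (eq_zero_of_dvd_of_natDegree_lt hdvd ?_)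
  rw [natDegree_pow, natDegree_nodal]
  exact (natDegree_sub_le _ _).trans_lt
    (max_lt hP ((natDegree_hermiteInterpolate_le P).trans_lt (by omega)))

theorem coeff_eq_sum_sqNodalResidue (hvs : Set.InjOn v s) {P : F[X]}
    (hP : P.natDegree < 2 * #s) :
    P.coeff (2 * #s - 1) = ∑ i ∈ s, sqNodalResidue s v P i := by
  conv_lhs => rw [eq_hermiteInterpolate hvs hP]
  exact coeff_hermiteInterpolate P

end Lagrange

open scoped Nat

@[to_additive]
theorem Finset.prod_range_succ_erase_eq {M : Type*} [CommMonoid M] (f : ℕ → M) {n k : ℕ}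
    (hk : k ≤ n) :
    ∏ j ∈ (range (n + 1)).erase k, f j =
      (∏ i ∈ Icc 1 k, f (k - i)) * ∏ i ∈ Icc 1 (n - k), f (k + i) := by
  have hsplit : (range (n + 1)).erase k = range k ∪ Ioc k n := by
    ext j; grind
  rw [hsplit, prod_union (disjoint_left.2 fun j hj hj' => by grind)]
  congr 1
  · refine prod_nbij' (k - ·) (k - ·) ?_ ?_ ?_ ?_ ?_ <;> intro j hj <;> grind
  · refine prod_nbij' (· - k) (k + ·) ?_ ?_ ?_ ?_ ?_ <;> intro j hj <;> grind

variable {K : Type*} [Field K]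

theorem sq_nodalWeight_range_natCast [CharZero K] {n k : ℕ} (hk : k ≤ n) :
    nodalWeight (range (n + 1)) (Nat.cast : ℕ → K) k ^ 2 = ((n.choose k : K) / n !) ^ 2 := by
  have hprod :
      ∏ j ∈ (range (n + 1)).erase k, ((k : K) - j) = (-1) ^ (n - k) * (k ! * (n - k)!) := by
    have hfact (m : ℕ) : ∏ i ∈ Icc 1 m, (i : K) = m ! := by
      rw [← Ico_add_one_right_eq_Icc, ← Nat.cast_prod, prod_Ico_id_eq_factorial]
    have hleft : ∏ i ∈ Icc 1 k, ((k : K) - (k - i : ℕ)) = k ! := by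
      rw [← hfact]
      exact prod_congr rfl fun i hi => by rw [Nat.cast_sub (mem_Icc.1 hi).2]; ring
    have hright :
        ∏ i ∈ Icc 1 (n - k), ((k : K) - (k + i : ℕ)) = (-1) ^ (n - k) * (n - k)! := by
      calc ∏ i ∈ Icc 1 (n - k), ((k : K) - (k + i : ℕ))
          = ∏ i ∈ Icc 1 (n - k), -(i : K) := prod_congr rfl fun i _ => by push_cast; ring
        _ = _ := by rw [prod_neg, Nat.card_Icc, Nat.add_sub_cancel, hfact]
    rw [prod_range_succ_erase_eq _ hk, hleft, hright]
    ring
  have hchoose : (n.choose k : K) ≠ 0 := Nat.cast_ne_zero.2 (Nat.choose_pos hk).ne'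
  rw [nodalWeight, prod_inv_distrib, hprod, inv_pow, mul_pow, ← pow_mul, mul_comm (n - k),
    pow_mul, neg_one_sq, one_pow, one_mul, ← Nat.choose_mul_factorial_mul_factorial hk]
  push_cast
  field_simp

theorem sum_inv_sub_range_natCast {n k : ℕ} (hk : k ≤ n) :
    ∑ j ∈ (range (n + 1)).erase k, ((k : K) - j)⁻¹ =
      ∑ i ∈ Icc 1 k, 1 / (i : K) - ∑ i ∈ Icc 1 (n - k), 1 / (i : K) := by
  rw [sum_range_succ_erase_eq _ hk, sub_eq_add_neg, ← sum_neg_distrib]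
  congr 1 <;> refine sum_congr rfl fun i hi => ?_ <;> simp only [mem_Icc] at hi
  · rw [Nat.cast_sub hi.2]; ring
  · push_cast; ring

theorem eval_nodal_range_neg_succ (ν k : ℕ) :
    (nodal (range ν) fun i => -((i : K) + 1)).eval (k : K) = ν ! * (ν + k).choose k := by
  have h : ν ! * (ν + k).choose k = ∏ i ∈ range ν, (k + 1 + i) := by
    rw [← Nat.choose_symm_add, add_comm ν k, ← Nat.ascFactorial_eq_factorial_mul_choose,
      Nat.ascFactorial_eq_prod_range]
  rw [eval_nodal, ← Nat.cast_mul, h]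
  push_cast
  exact prod_congr rfl fun i _ => by ring

theorem sum_inv_sub_range_neg_succ (ν k : ℕ) :
    ∑ i ∈ range ν, ((k : K) - -((i : K) + 1))⁻¹ = ∑ κ ∈ Icc (k + 1) (ν + k), 1 / (κ : K) := by
  rw [← Ico_add_one_right_eq_Icc, sum_Ico_eq_sum_range, show ν + k + 1 - (k + 1) = ν by omega]
  push_cast
  exact sum_congr rfl fun i _ => by ring

theorem sqNodalResidue_range_natCast (α ν r : ℕ) {k : ℕ} (hk : k ≤ ν + α) :
    sqNodalResidue (range (ν + α + 1)) (Nat.cast : ℕ → ℝ)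
        (X ^ r * nodal (range ν) (fun i => -((i : ℝ) + 1)) ^ 2) k =
      -((ν ! : ℝ) / (ν + α)!) ^ 2 *
        (2 * (k : ℝ) ^ r * (Nat.choose (ν + α) k : ℝ) ^ 2 * (Nat.choose (ν + k) k : ℝ) ^ 2 *
            S1 α ν k -
          (r : ℝ) * (k : ℝ) ^ (r - 1) * (Nat.choose (ν + α) k : ℝ) ^ 2 *
            (Nat.choose (ν + k) k : ℝ) ^ 2) := by
  have hG' : (derivative (nodal (range ν) fun i => -((i : ℝ) + 1))).eval (k : ℝ) =
      (nodal (range ν) fun i => -((i : ℝ) + 1)).eval (k : ℝ) *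
        ∑ κ ∈ Icc (k + 1) (ν + k), 1 / (κ : ℝ) := by
    rw [eval_derivative_nodal_eq_mul_sum fun i _ h => by
      linarith [(k.cast_nonneg : (0 : ℝ) ≤ k), (i.cast_nonneg : (0 : ℝ) ≤ i)],
      sum_inv_sub_range_neg_succ]
  rw [sqNodalResidue, sq_nodalWeight_range_natCast hk, sum_inv_sub_range_natCast hk]
  simp only [derivative_mul, derivative_pow, derivative_X, eval_add, eval_mul, eval_pow, eval_C,
    eval_X, eval_one, hG', eval_nodal_range_neg_succ, S1]
  field_simp
  ring

/-- For `α ≥ 1`, `ν ≥ 0` and `r ∈ {0,1,2}`: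
`∑_{k=0}^{ν+α} (2 k^r C(ν+α,k)² C(ν+k,k)² S_{1,k}(α,ν) − r k^{r−1} C(ν+α,k)² C(ν+k,k)²) = 0`
(the term `r k^{r−1}` being `0` when `r = 0`; here `r − 1` is truncated subtraction, so the
factor `(r : ℝ)` already makes the term vanish at `r = 0`). -/
theorem stmt_14 (α ν : ℕ) (hα : 1 ≤ α) (r : ℕ) (hr : r ≤ 2) :
    ∑ k ∈ Finset.range (ν + α + 1),
      (2 * (k : ℝ) ^ r * (Nat.choose (ν + α) k : ℝ) ^ 2 * (Nat.choose (ν + k) k : ℝ) ^ 2 *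
          S1 α ν k -
        (r : ℝ) * (k : ℝ) ^ (r - 1) * (Nat.choose (ν + α) k : ℝ) ^ 2 *
          (Nat.choose (ν + k) k : ℝ) ^ 2) = 0 := by
  set P : ℝ[X] := X ^ r * nodal (range ν) (fun i => -((i : ℝ) + 1)) ^ 2
  have hdeg : P.natDegree < 2 * #(range (ν + α + 1)) - 1 := by
    refine natDegree_mul_le.trans_lt ?_
    rw [natDegree_X_pow, natDegree_pow, natDegree_nodal, card_range, card_range]
    omega
  have hres := coeff_eq_sum_sqNodalResidue (s := range (ν + α + 1)) Nat.cast_injective.injOn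
    (hdeg.trans_le (Nat.sub_le _ _))
  rw [coeff_eq_zero_of_natDegree_lt hdeg, sum_congr rfl fun k hk =>
    sqNodalResidue_range_natCast α ν r (Nat.lt_succ_iff.1 (mem_range.1 hk)), ← mul_sum] at hres
  refine (mul_eq_zero.1 hres.symm).resolve_left ?_
  simp [Nat.factorial_ne_zero]
end

section
/- Define Q^{(2)}_ν = ∑_{k=0}^{ν+1} k² · C(ν+1, k)² · C(ν+k, ν)² for integers ν ≥ 0. Then for every integer ν ≥ 1, with τ = ν+1: (τ+1)(2τ−1) τ² (τ³ − (τ−1)³) · Q^{(2)}_{ν+1} − 2(102τ⁶ − 68τ⁴ + 21τ² − 3) · Q^{(2)}_ν + (τ−1)(2τ+1) τ² ((τ+1)³ − τ³) · Q^{(2)}_{ν−1} = 0. -/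
/-- `Q^{(2)}_ν = ∑_{k=0}^{ν+1} k² · C(ν+1,k)² · C(ν+k,ν)²`. -/
def Q2 (ν : ℕ) : ℚ :=
  ∑ k ∈ Finset.range (ν + 2),
    (k : ℚ) ^ 2 * (Nat.choose (ν + 1) k : ℚ) ^ 2 * (Nat.choose (ν + k) ν : ℚ) ^ 2

/-!
Zeilberger's creative telescoping.  For the summand `F(n, k) = k² C(n+1,k)² C(n+k,k)²`
(`Q2Term n k`) of `Q2 n`, the combination `c₂ F(m+2,k) - c₁ F(m+1,k) + c₀ F(m,k)` with the
recurrence's coefficients at `τ = m + 2` equals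
`G(m,k+1) - G(m,k)` for the certificate `G(m,k) = k⁴ q(m+1,k) C(m+3,k)² C(m+k,k)² / ((m+1)(m+2)(m+3))²`.
All binomials involved are rational multiples of `C(m+3,k) C(m+k,k)`, so this is an identity of
rational functions; summing over `k` telescopes to `G(m, m+4) - G(m, 0) = 0`.
-/

theorem cast_choose_mul_succ {R : Type*} [CommRing R] (n k : ℕ) :
    (n.choose k : R) * (n + 1) = (n + 1).choose k * (n + 1 - k) := by
  rcases le_or_gt k (n + 1) with hk | hk
  · have h := congrArg (Nat.cast : ℕ → R) (Nat.choose_mul_succ_eq n k)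
    push_cast [Nat.cast_sub hk] at h
    exact h
  · rw [Nat.choose_eq_zero_of_lt (by omega), Nat.choose_eq_zero_of_lt hk]
    simp

section CastChoose

variable {K : Type*} [Field K] [CharZero K]

theorem cast_choose_eq_mul_div_succ (n k : ℕ) :
    (n.choose k : K) = (n + 1).choose k * (n + 1 - k) / (n + 1) := by
  rw [eq_div_iff (Nat.cast_add_one_ne_zero n), cast_choose_mul_succ]

theorem cast_choose_add_succ (n k : ℕ) :
    ((n + k + 1).choose k : K) = (n + k).choose k * (n + k + 1) / (n + 1) := by
  rw [eq_div_iff (Nat.cast_add_one_ne_zero n)]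
  have h := cast_choose_mul_succ (R := K) (n + k) k
  push_cast at h
  linear_combination -h

theorem cast_choose_succ_succ (n k : ℕ) :
    ((n + 1).choose (k + 1) : K) = (n + 1) * n.choose k / (k + 1) := by
  rw [eq_div_iff (Nat.cast_add_one_ne_zero k)]
  exact_mod_cast (Nat.add_one_mul_choose_eq n k).symm

end CastChoose

def Q2Term (n k : ℕ) : ℚ :=
  (k : ℚ) ^ 2 * ((n + 1).choose k : ℚ) ^ 2 * ((n + k).choose k : ℚ) ^ 2

theorem Q2_eq_sum_Q2Term {n N : ℕ} (hN : n + 2 ≤ N) :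
    Q2 n = ∑ k ∈ Finset.range N, Q2Term n k := by
  have hQ : Q2 n = ∑ k ∈ Finset.range (n + 2), Q2Term n k :=
    Finset.sum_congr rfl fun k _ => by rw [Q2Term, Nat.choose_symm_add]
  rw [hQ]
  refine Finset.sum_subset (Finset.range_subset_range.mpr hN) fun k _ hk => ?_
  rw [Finset.mem_range, not_lt] at hk
  simp [Q2Term, Nat.choose_eq_zero_of_lt (show n + 1 < k by omega)]

def Q2CertPoly (n k : ℚ) : ℚ :=
  -252 * n^1 - 1854 * n^2 - 5696 * n^3 - 9456 * n^4 - 9120 * n^5 - 5104 * n^6 - 1536 * n^7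
  - 192 * n^8 - 168 * k^1 - 616 * n^1 * k^1 + 636 * n^2 * k^1 + 6960 * n^3 * k^1
  + 15404 * n^4 * k^1 + 16800 * n^5 * k^1 + 9968 * n^6 * k^1 + 3072 * n^7 * k^1
  + 384 * n^8 * k^1 + 402 * k^2 + 2428 * n^1 * k^2 + 5502 * n^2 * k^2 + 4928 * n^3 * k^2
  - 1040 * n^4 * k^2 - 5664 * n^5 * k^2 - 4528 * n^6 * k^2 - 1536 * n^7 * k^2
  - 192 * n^8 * k^2 - 300 * k^3 - 2000 * n^1 * k^3 - 5496 * n^2 * k^3 - 7952 * n^3 * k^3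
  - 6308 * n^4 * k^3 - 2592 * n^5 * k^3 - 432 * n^6 * k^3 + 66 * k^4 + 440 * n^1 * k^4
  + 1212 * n^2 * k^4 + 1760 * n^3 * k^4 + 1400 * n^4 * k^4 + 576 * n^5 * k^4 + 96 * n^6 * k^4

def Q2Cert (m k : ℕ) : ℚ :=
  (k : ℚ) ^ 4 * Q2CertPoly ((m : ℚ) + 1) k * ((m + 3).choose k : ℚ) ^ 2
    * ((m + k).choose k : ℚ) ^ 2 / (((m : ℚ) + 1) ^ 2 * ((m : ℚ) + 2) ^ 2 * ((m : ℚ) + 3) ^ 2)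

theorem Q2Cert_zero (m : ℕ) : Q2Cert m 0 = 0 := by
  simp [Q2Cert]

theorem Q2Cert_add_four (m : ℕ) : Q2Cert m (m + 4) = 0 := by
  simp [Q2Cert]

theorem Q2Term_telescope (m k : ℕ) (τ : ℚ) (hτ : τ = (m : ℚ) + 2) :
    (τ + 1) * (2 * τ - 1) * τ ^ 2 * (τ ^ 3 - (τ - 1) ^ 3) * Q2Term (m + 2) k -
        2 * (102 * τ ^ 6 - 68 * τ ^ 4 + 21 * τ ^ 2 - 3) * Q2Term (m + 1) k +
        (τ - 1) * (2 * τ + 1) * τ ^ 2 * ((τ + 1) ^ 3 - τ ^ 3) * Q2Term m k =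
      Q2Cert m (k + 1) - Q2Cert m k := by
  subst hτ
  have h2 : ((m + 2).choose k : ℚ) = (m + 3).choose k * (m + 3 - k) / (m + 3) := by
    rw [cast_choose_eq_mul_div_succ]
    push_cast
    ring
  have h1 : ((m + 1).choose k : ℚ) = (m + 2).choose k * (m + 2 - k) / (m + 2) := by
    rw [cast_choose_eq_mul_div_succ]
    push_cast
    ring
  have h1k : ((m + 1 + k).choose k : ℚ) = (m + k).choose k * (m + k + 1) / (m + 1) := by
    rw [add_right_comm, cast_choose_add_succ]
  have h2k : ((m + 2 + k).choose k : ℚ) = (m + 1 + k).choose k * (m + k + 2) / (m + 2) := by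
    rw [show m + 2 + k = m + 1 + k + 1 by omega, cast_choose_add_succ]
    push_cast
    ring
  have h3s : ((m + 3).choose (k + 1) : ℚ) = (m + 3) * (m + 2).choose k / (k + 1) := by
    rw [cast_choose_succ_succ]
    push_cast
    ring
  have hks : ((m + (k + 1)).choose (k + 1) : ℚ) = (m + k + 1) * (m + k).choose k / (k + 1) := by
    rw [← add_assoc, cast_choose_succ_succ]
    push_cast
    ring
  simp only [Q2Term, Q2Cert, show m + 2 + 1 = m + 3 from rfl, show m + 1 + 1 = m + 2 from rfl]
  rw [h2k, h1k, h3s, hks, h1, h2]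
  push_cast
  unfold Q2CertPoly
  field_simp
  ring

theorem Q2_recurrence (m : ℕ) (τ : ℚ) (hτ : τ = (m : ℚ) + 2) :
    (τ + 1) * (2 * τ - 1) * τ ^ 2 * (τ ^ 3 - (τ - 1) ^ 3) * Q2 (m + 2) -
        2 * (102 * τ ^ 6 - 68 * τ ^ 4 + 21 * τ ^ 2 - 3) * Q2 (m + 1) +
        (τ - 1) * (2 * τ + 1) * τ ^ 2 * ((τ + 1) ^ 3 - τ ^ 3) * Q2 m = 0 := by
  rw [Q2_eq_sum_Q2Term (N := m + 4) le_rfl, Q2_eq_sum_Q2Term (N := m + 4) (by omega),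
    Q2_eq_sum_Q2Term (N := m + 4) (by omega), Finset.mul_sum, Finset.mul_sum, Finset.mul_sum,
    ← Finset.sum_sub_distrib, ← Finset.sum_add_distrib,
    Finset.sum_congr rfl fun k _ => Q2Term_telescope m k τ hτ, Finset.sum_range_sub,
    Q2Cert_add_four, Q2Cert_zero, sub_zero]

/-- For every `ν ≥ 1`, with `τ = ν+1`:
`(τ+1)(2τ−1)τ²(τ³−(τ−1)³) Q^{(2)}_{ν+1} − 2(102τ⁶−68τ⁴+21τ²−3) Q^{(2)}_ν +
(τ−1)(2τ+1)τ²((τ+1)³−τ³) Q^{(2)}_{ν−1} = 0`. -/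
theorem stmt_17 :
    ∀ ν : ℕ, 1 ≤ ν → ∀ τ : ℚ, τ = (ν : ℚ) + 1 →
      (τ + 1) * (2 * τ - 1) * τ ^ 2 * (τ ^ 3 - (τ - 1) ^ 3) * Q2 (ν + 1) -
        2 * (102 * τ ^ 6 - 68 * τ ^ 4 + 21 * τ ^ 2 - 3) * Q2 ν +
        (τ - 1) * (2 * τ + 1) * τ ^ 2 * ((τ + 1) ^ 3 - τ ^ 3) * Q2 (ν - 1) = 0 := by
  rintro ν hν τ rfl
  obtain ⟨m, rfl⟩ : ∃ m, ν = m + 1 := ⟨ν - 1, by omega⟩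
  exact Q2_recurrence m _ (by push_cast; ring)
end

section
/- Define g_ν = (1/(ν+1)²) · ∑_{k=0}^{ν+1} C(ν+1, k)² · C(ν+k, ν)² for integers ν ≥ 0. Then for every integer ν ≥ 1, with τ = ν+1: (τ+1)⁵ (2τ−1)(τ³ − (τ−1)³) · g_{ν+1} − 2τ² (102τ⁶ − 68τ⁴ + 21τ² − 3) · g_ν + (τ−1)⁵ (2τ+1)((τ+1)³ − τ³) · g_{ν−1} = 0. -/
/-- `g_ν = (1/(ν+1)²) · ∑_{k=0}^{ν+1} C(ν+1,k)² · C(ν+k,ν)²`. -/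
def g (ν : ℕ) : ℚ :=
  (1 / ((ν : ℚ) + 1) ^ 2) *
    ∑ k ∈ Finset.range (ν + 2),
      (Nat.choose (ν + 1) k : ℚ) ^ 2 * (Nat.choose (ν + k) ν : ℚ) ^ 2

/-!
Creative telescoping. Write `S ν = ∑ₖ t(ν, k)` with `t(ν, k) = C(ν+1,k)² C(ν+k,ν)²`, so that
`g ν = S ν / (ν+1)²`. With `τ = ν + 2`, the combination `A(τ) t(ν+2, k) - B(τ) t(ν+1, k) + C(τ) t(ν, k)`
of the shifted summands, with the coefficients of the recurrence, equals `G(k+1) - G(k)` for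
`G(k) = R(τ, k) t(ν+1, k-1)`, where the polynomial `R` is the certificate produced by Zeilberger's
algorithm. All terms are hypergeometric in `k`, so after dividing by `t(ν+1, k-1)` this is a
polynomial identity. Summing over `k`, the right-hand side telescopes to `0`.
-/

open Finset

namespace Nat

theorem choose_add_succ_mul (n j : ℕ) :
    (n + j + 1).choose n * (j + 1) = (n + j + 1) * (n + j).choose n := by
  have h := choose_mul_succ_eq (n + j) n
  rw [show n + j + 1 - n = j + 1 by omega] at h
  linarith

theorem cast_choose_succ_right_mul {R : Type*} [Ring R] (n k : ℕ) :
    (n.choose (k + 1) : R) * (k + 1) = n.choose k * (n - k) := by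
  rcases le_or_gt k n with h | h
  · have e := congrArg (Nat.cast : ℕ → R) (choose_succ_right_eq n k)
    push_cast [Nat.cast_sub h] at e
    exact e
  · simp [choose_eq_zero_of_lt h, choose_eq_zero_of_lt (lt_succ_of_lt h)]

end Nat

def gTerm (ν k : ℕ) : ℚ := (Nat.choose (ν + 1) k : ℚ) ^ 2 * (Nat.choose (ν + k) ν : ℚ) ^ 2

def gSum (ν : ℕ) : ℚ := ∑ k ∈ range (ν + 2), gTerm ν k

theorem g_eq_gSum_div (ν : ℕ) : g ν = gSum ν / ((ν : ℚ) + 1) ^ 2 := by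
  rw [g, gSum, one_div, inv_mul_eq_div]
  rfl

theorem gTerm_zero_right (ν : ℕ) : gTerm ν 0 = 1 := by
  simp [gTerm]

theorem gTerm_eq_zero_of_lt {ν k : ℕ} (h : ν + 1 < k) : gTerm ν k = 0 := by
  simp [gTerm, Nat.choose_eq_zero_of_lt h]

theorem sum_range_gTerm_of_le {ν N : ℕ} (h : ν + 2 ≤ N) :
    ∑ k ∈ range N, gTerm ν k = gSum ν :=
  (sum_subset (range_subset_range.2 h) fun _ _ hk =>
    gTerm_eq_zero_of_lt (by simp only [mem_range] at hk; omega)).symm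

theorem gTerm_succ_right (ν j : ℕ) :
    gTerm ν (j + 1) * ((j : ℚ) + 1) ^ 4
      = gTerm ν j * ((((ν : ℚ) + 1 - j) * ((ν : ℚ) + 1 + j)) ^ 2) := by
  have h₁ := Nat.cast_choose_succ_right_mul (R := ℚ) (ν + 1) j
  have h₂ : ((ν + j + 1).choose ν : ℚ) * ((j : ℚ) + 1) = ((ν : ℚ) + j + 1) * (ν + j).choose ν := by
    exact_mod_cast Nat.choose_add_succ_mul ν j
  push_cast at h₁
  simp only [gTerm, ← add_assoc]
  calc _ = (((ν + 1).choose (j + 1) : ℚ) * (j + 1)) ^ 2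
          * (((ν + j + 1).choose ν : ℚ) * (j + 1)) ^ 2 := by ring
    _ = _ := by rw [h₁, h₂]; ring

theorem gTerm_succ_succ (ν j : ℕ) :
    gTerm (ν + 1) (j + 1) * (((ν : ℚ) + 1) * ((j : ℚ) + 1) ^ 2) ^ 2
      = gTerm ν j * (((ν : ℚ) + 2) * ((ν : ℚ) + j + 1) * ((ν : ℚ) + j + 2)) ^ 2 := by
  have h₁ : ((ν + 2).choose (j + 1) : ℚ) * ((j : ℚ) + 1) = ((ν : ℚ) + 2) * (ν + 1).choose j := by
    exact_mod_cast (Nat.add_one_mul_choose_eq (ν + 1) j).symm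
  have h₂ : ((ν + j + 2).choose (ν + 1) : ℚ) * ((ν : ℚ) + 1)
      = ((ν : ℚ) + j + 2) * (ν + j + 1).choose ν := by
    exact_mod_cast (Nat.add_one_mul_choose_eq (ν + j + 1) ν).symm
  have h₃ : ((ν + j + 1).choose ν : ℚ) * ((j : ℚ) + 1) = ((ν : ℚ) + j + 1) * (ν + j).choose ν := by
    exact_mod_cast Nat.choose_add_succ_mul ν j
  have hidx : ν + 1 + (j + 1) = ν + j + 2 := by omega
  simp only [gTerm, hidx, show ν + 1 + 1 = ν + 2 from rfl]
  calc _ = (((ν + 2).choose (j + 1) : ℚ) * (j + 1)) ^ 2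
          * (((ν + j + 2).choose (ν + 1) : ℚ) * (ν + 1) * (j + 1)) ^ 2 := by ring
    _ = ((ν + 2) * (ν + 1).choose j) ^ 2
          * ((ν + j + 2) * (((ν + j + 1).choose ν : ℚ) * (j + 1))) ^ 2 := by rw [h₁, h₂]; ring
    _ = _ := by rw [h₃]; ring

def zeilbergerCertificate (n k : ℚ) : ℚ :=
  (-420*n - 3538*n^2 - 13056*n^3 - 27968*n^4 - 38528*n^5 - 35392*n^6
      - 21632*n^7 - 8464*n^8 - 1920*n^9 - 192*n^10)
  + (-336 - 2312*n - 6756*n^2 - 11328*n^3 - 12296*n^4 - 8904*n^5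
      - 4172*n^6 - 1152*n^7 - 144*n^8)*k
  + (390 + 2516*n + 6730*n^2 + 10144*n^3 + 9912*n^4 + 6576*n^5
      + 2888*n^6 + 768*n^7 + 96*n^8)*k^2
  + (-180 - 1032*n - 2276*n^2 - 2528*n^3 - 1592*n^4 - 576*n^5 - 96*n^6)*k^3
  + (30 + 152*n + 268*n^2 + 192*n^3 + 48*n^4)*k^4

def zeilbergerTelescoper (ν : ℕ) : ℕ → ℚ
  | 0 => 0
  | j + 1 => zeilbergerCertificate ((ν : ℚ) + 1) ((j : ℚ) + 1) * gTerm (ν + 1) j / ((ν : ℚ) + 2) ^ 4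

theorem gTerm_creative_telescoping (ν k : ℕ) (τ : ℚ) (hτ : τ = ν + 2) :
    (τ + 1) ^ 3 * (2 * τ - 1) * (τ ^ 3 - (τ - 1) ^ 3) * gTerm (ν + 2) k
      - 2 * (102 * τ ^ 6 - 68 * τ ^ 4 + 21 * τ ^ 2 - 3) * gTerm (ν + 1) k
      + (τ - 1) ^ 3 * (2 * τ + 1) * ((τ + 1) ^ 3 - τ ^ 3) * gTerm ν k
    = zeilbergerTelescoper ν (k + 1) - zeilbergerTelescoper ν k := by
  subst hτ
  rcases k with _ | j
  · simp only [gTerm_zero_right, zeilbergerTelescoper, zeilbergerCertificate]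
    push_cast
    field_simp
    ring
  · have e₁ : gTerm (ν + 2) (j + 1) = gTerm (ν + 1) j
        * (((ν : ℚ) + 3) * ((ν : ℚ) + j + 2) * ((ν : ℚ) + j + 3)) ^ 2
        / (((ν : ℚ) + 2) * ((j : ℚ) + 1) ^ 2) ^ 2 := by
      rw [eq_div_iff (by positivity)]
      have h := gTerm_succ_succ (ν + 1) j
      push_cast at h
      linear_combination h
    have e₂ : gTerm (ν + 1) (j + 1) = gTerm (ν + 1) j
        * (((ν : ℚ) + 2 - j) * ((ν : ℚ) + 2 + j)) ^ 2 / ((j : ℚ) + 1) ^ 4 := by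
      rw [eq_div_iff (by positivity)]
      have h := gTerm_succ_right (ν + 1) j
      push_cast at h
      linear_combination h
    have e₃ : gTerm ν (j + 1) = gTerm ν j
        * (((ν : ℚ) + 1 - j) * ((ν : ℚ) + 1 + j)) ^ 2 / ((j : ℚ) + 1) ^ 4 := by
      rw [eq_div_iff (by positivity)]
      exact gTerm_succ_right ν j
    -- Going through `gTerm (ν + 1) (j + 1)` avoids dividing by `ν + 2 - j`, which may vanish.
    have e₄ : gTerm ν j = gTerm (ν + 1) (j + 1) * (((ν : ℚ) + 1) * ((j : ℚ) + 1) ^ 2) ^ 2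
        / (((ν : ℚ) + 2) * ((ν : ℚ) + j + 1) * ((ν : ℚ) + j + 2)) ^ 2 := by
      rw [eq_div_iff (by positivity)]
      exact (gTerm_succ_succ ν j).symm
    simp only [zeilbergerTelescoper, zeilbergerCertificate]
    rw [e₁, e₃, e₄, e₂]
    push_cast
    field_simp
    ring

theorem gSum_recurrence (ν : ℕ) (τ : ℚ) (hτ : τ = ν + 2) :
    (τ + 1) ^ 3 * (2 * τ - 1) * (τ ^ 3 - (τ - 1) ^ 3) * gSum (ν + 2)
      - 2 * (102 * τ ^ 6 - 68 * τ ^ 4 + 21 * τ ^ 2 - 3) * gSum (ν + 1)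
      + (τ - 1) ^ 3 * (2 * τ + 1) * ((τ + 1) ^ 3 - τ ^ 3) * gSum ν = 0 := by
  rw [← sum_range_gTerm_of_le (ν := ν + 2) (N := ν + 4) le_rfl,
    ← sum_range_gTerm_of_le (ν := ν + 1) (N := ν + 4) (by omega),
    ← sum_range_gTerm_of_le (ν := ν) (N := ν + 4) (by omega),
    mul_sum, mul_sum, mul_sum, ← sum_sub_distrib, ← sum_add_distrib,
    sum_congr rfl fun k _ => gTerm_creative_telescoping ν k τ hτ, sum_range_sub]
  simp [zeilbergerTelescoper, gTerm_eq_zero_of_lt (show ν + 1 + 1 < ν + 3 by omega)]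

/-- For every `ν ≥ 1`, with `τ = ν+1`:
`(τ+1)⁵(2τ−1)(τ³−(τ−1)³) g_{ν+1} − 2τ²(102τ⁶−68τ⁴+21τ²−3) g_ν +
(τ−1)⁵(2τ+1)((τ+1)³−τ³) g_{ν−1} = 0`. -/
theorem stmt_18 :
    ∀ ν : ℕ, 1 ≤ ν → ∀ τ : ℚ, τ = (ν : ℚ) + 1 →
      (τ + 1) ^ 5 * (2 * τ - 1) * (τ ^ 3 - (τ - 1) ^ 3) * g (ν + 1) -
        2 * τ ^ 2 * (102 * τ ^ 6 - 68 * τ ^ 4 + 21 * τ ^ 2 - 3) * g ν +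
        (τ - 1) ^ 5 * (2 * τ + 1) * ((τ + 1) ^ 3 - τ ^ 3) * g (ν - 1) = 0 := by
  intro ν hν τ hτ
  obtain ⟨n, rfl⟩ : ∃ n, ν = n + 1 := ⟨ν - 1, by omega⟩
  have hrec := gSum_recurrence n τ (by rw [hτ]; push_cast; ring)
  simp only [g_eq_gSum_div, Nat.add_sub_cancel, show n + 1 + 1 = n + 2 from rfl]
  subst hτ
  push_cast at hrec ⊢
  field_simp
  linear_combination ((n : ℚ) + 1) ^ 2 * ((n : ℚ) + 3) ^ 2 * hrec
end
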